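/- arXiv:2008.06882 — 6 statements merged into one kernel-verified Lean document; each statement's English description precedes it below -/
import Mathlib

section
/- In the discrete-time standard Dynkin game with X ≤ Z ≤ Y, the stopping times τ*_t = min{u ∈ {t,...,T} : V_u = X_u} and σ*_t = min{u ∈ {t,...,T} : V_u = Y_u} form a Nash equilibrium: for all stopping times τ, σ with values in {t,...,T}, E[R(τ*_t, σ) | F_t] ≥ E[R(τ*_t, σ*_t) | F_t] ≥ E[R(τ, σ*_t) | F_t], where R(τ,σ) = X_τ 1{τ<σ} + Y_σ 1{σ<τ} + Z_σ 1{σ=τ}. -/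
/-!
Write `R(τ, σ)` for the payoff. Before `τ*` the value exceeds `X`, so the recursion
`V_u = min (Y_u, max (X_u, E[V_{u+1} | ℱ_u]))` forces `V_u ≤ E[V_{u+1} | ℱ_u]`; the value process
stopped at `τ* ∧ σ` is thus a submartingale from time `t` on, giving
`V_t ≤ E[V_{τ* ∧ σ} | ℱ_t] ≤ E[R(τ*, σ) | ℱ_t]`, the last step because `V = X` at `τ*`,
`X ≤ Z` and `V ≤ Y`. Symmetrically `V` is a supermartingale before `σ*`, so
`E[R(τ, σ*) | ℱ_t] ≤ V_t` for every `τ`. Taking `σ = σ*` and `τ = τ*` yields both inequalities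
of the saddle point.
-/

open MeasureTheory Filter Set

/-- Payoff of the Dynkin game: `X_τ` if `τ < σ`, `Y_σ` if `σ < τ`, `Z_σ` if `σ = τ`. -/
noncomputable def payoffD {Ω : Type*} (X Y Z : ℕ → Ω → ℝ) (τ σ : Ω → ℕ) (ω : Ω) : ℝ :=
  if τ ω < σ ω then X (τ ω) ω else if σ ω < τ ω then Y (σ ω) ω else Z (σ ω) ω

section OptionalSampling

variable {Ω : Type*} {m0 : MeasurableSpace Ω} {μ : Measure Ω} [IsFiniteMeasure μ]
  {ℱ : Filtration ℕ m0}

theorem ae_le_condExp_of_ae_le_condExp_succ {f : ℕ → Ω → ℝ} {t : ℕ}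
    (hft : StronglyMeasurable[ℱ t] (f t)) (hfi : ∀ n, Integrable (f n) μ)
    (hf : ∀ k, t ≤ k → f k ≤ᵐ[μ] μ[f (k + 1) | ℱ k]) {n : ℕ} (htn : t ≤ n) :
    f t ≤ᵐ[μ] μ[f n | ℱ t] := by
  induction n, htn using Nat.le_induction with
  | base => rw [condExp_of_stronglyMeasurable (ℱ.le t) hft (hfi t)]
  | succ k htk hk =>
    filter_upwards [hk, condExp_mono (hfi k) integrable_condExp (hf k htk),
      ℱ.condExp_condExp (f (k + 1)) htk] with ω hω1 hω2 hω3
    grw [hω1, hω2, hω3]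

theorem stoppedProcess_add_one_eq_indicator {β : Type*} [AddZeroClass β] (f : ℕ → Ω → β)
    (τ : Ω → WithTop ℕ) (k : ℕ) :
    stoppedProcess f τ (k + 1) =
      {ω | τ ω ≤ k}.indicator (stoppedProcess f τ k) + {ω | τ ω ≤ k}ᶜ.indicator (f (k + 1)) := by
  ext ω
  by_cases hω : τ ω ≤ k
  · have hω' : τ ω ≤ (k + 1 : ℕ) := hω.trans (by simp)
    simp only [Pi.add_apply, indicator_of_mem (show ω ∈ {ω | τ ω ≤ k} from hω),
      indicator_of_notMem (show ω ∉ {ω | τ ω ≤ k}ᶜ from not_not_intro hω), add_zero]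
    rw [stoppedProcess_eq_of_ge (i := k + 1) hω', stoppedProcess_eq_of_ge (i := k) hω]
  · have hω' : ↑(k + 1) ≤ τ ω := Order.add_one_le_of_lt (α := ℕ∞) (not_le.1 hω)
    simp only [Pi.add_apply, indicator_of_notMem (show ω ∉ {ω | τ ω ≤ k} from hω),
      indicator_of_mem (show ω ∈ {ω | τ ω ≤ k}ᶜ from hω), zero_add]
    exact stoppedProcess_eq_of_le hω'

theorem stoppedProcess_ae_le_condExp_succ {f : ℕ → Ω → ℝ} (hf : StronglyAdapted ℱ f)
    (hfi : ∀ n, Integrable (f n) μ) {τ : Ω → WithTop ℕ} (hτ : IsStoppingTime ℱ τ) {k : ℕ}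
    (hk : ∀ᵐ ω ∂μ, (k : WithTop ℕ) < τ ω → f k ω ≤ μ[f (k + 1) | ℱ k] ω) :
    stoppedProcess f τ k ≤ᵐ[μ] μ[stoppedProcess f τ (k + 1) | ℱ k] := by
  set A : Set Ω := {ω | τ ω ≤ k}
  have hA : MeasurableSet[ℱ k] A := hτ k
  have hGi : Integrable (A.indicator (stoppedProcess f τ k)) μ :=
    (integrable_stoppedProcess hτ hfi k).indicator (ℱ.le k _ hA)
  have hstopped :
      μ[A.indicator (stoppedProcess f τ k) | ℱ k] = A.indicator (stoppedProcess f τ k) :=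
    condExp_of_stronglyMeasurable (ℱ.le k) ((hf.stoppedProcess_of_discrete hτ k).indicator hA) hGi
  have hcont : μ[Aᶜ.indicator (f (k + 1)) | ℱ k] =ᵐ[μ] Aᶜ.indicator (μ[f (k + 1) | ℱ k]) :=
    condExp_indicator (hfi (k + 1)) hA.compl
  have hadd := condExp_add hGi ((hfi (k + 1)).indicator (ℱ.le k _ hA.compl)) (ℱ k)
  rw [stoppedProcess_add_one_eq_indicator]
  filter_upwards [hcont, hadd, hk] with ω hcontω haddω hkω
  rw [haddω, Pi.add_apply, hstopped, hcontω]
  by_cases hω : ω ∈ A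
  · simp [hω]
  · simp only [indicator_of_notMem hω, indicator_of_mem (show ω ∈ Aᶜ from hω), zero_add]
    rw [stoppedProcess_eq_of_le (not_le.1 hω).le]
    exact hkω (not_le.1 hω)

theorem ae_le_condExp_stoppedValue {f : ℕ → Ω → ℝ} (hf : StronglyAdapted ℱ f)
    (hfi : ∀ n, Integrable (f n) μ) {τ : Ω → WithTop ℕ} (hτ : IsStoppingTime ℱ τ) {t N : ℕ}
    (htτ : ∀ ω, t ≤ τ ω) (hτN : ∀ ω, τ ω ≤ N)
    (hsub : ∀ k, t ≤ k → ∀ᵐ ω ∂μ, (k : WithTop ℕ) < τ ω → f k ω ≤ μ[f (k + 1) | ℱ k] ω) :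
    f t ≤ᵐ[μ] μ[stoppedValue f τ | ℱ t] := by
  have hchain := ae_le_condExp_of_ae_le_condExp_succ (hf.stoppedProcess_of_discrete hτ t)
    (integrable_stoppedProcess hτ hfi)
    (fun k htk => stoppedProcess_ae_le_condExp_succ hf hfi hτ (hsub k htk))
    (Nat.le_add_right t N)
  have h_start : stoppedProcess f τ t = f t := funext fun ω => stoppedProcess_eq_of_le (htτ ω)
  have h_end : stoppedProcess f τ (t + N) = stoppedValue f τ :=
    funext fun ω => stoppedProcess_eq_of_ge ((hτN ω).trans (by simp))
  rwa [h_start, h_end] at hchain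

theorem stronglyAdapted_comp_min {V : ℕ → Ω → ℝ} {T : ℕ}
    (hV : ∀ u ≤ T, StronglyMeasurable[ℱ u] (V u)) : StronglyAdapted ℱ (fun u => V (min u T)) :=
  fun u => (hV _ (min_le_right u T)).mono (ℱ.mono (min_le_left u T))

theorem ae_le_condExp_stopped_of_submartingale_before {V : ℕ → Ω → ℝ} {T t : ℕ}
    (hVm : ∀ u ≤ T, StronglyMeasurable[ℱ u] (V u)) (hVi : ∀ u, Integrable (V u) μ)
    {ρ : Ω → ℕ} (hρ : IsStoppingTime ℱ (fun ω => (ρ ω : WithTop ℕ))) (ht : t ≤ T)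
    (htρ : ∀ ω, t ≤ ρ ω) (hρT : ∀ ω, ρ ω ≤ T)
    (hstep : ∀ u, t ≤ u → u < T → ∀ᵐ ω ∂μ, u < ρ ω → V u ω ≤ μ[V (u + 1) | ℱ u] ω) :
    V t ≤ᵐ[μ] μ[fun ω => V (ρ ω) ω | ℱ t] := by
  -- `V` is only adapted up to `T`; frozen after `T` it becomes adapted on all of `ℕ`.
  have hW := ae_le_condExp_stoppedValue (stronglyAdapted_comp_min hVm) (fun u => hVi _) hρ
    (fun ω => Nat.cast_le.2 (htρ ω)) (fun ω => Nat.cast_le.2 (hρT ω)) fun u htu => by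
      rcases lt_or_ge u T with huT | hTu
      · filter_upwards [hstep u htu huT] with ω hω hlt
        simpa only [min_eq_left huT.le, min_eq_left (Nat.succ_le_of_lt huT)]
          using hω (Nat.cast_lt.1 hlt)
      · exact ae_of_all μ fun ω hlt => absurd ((hρT ω).trans hTu) (not_le.2 (Nat.cast_lt.1 hlt))
  have hstopped : stoppedValue (fun u => V (min u T)) (fun ω => (ρ ω : WithTop ℕ)) =
      fun ω => V (ρ ω) ω :=
    funext fun ω => congrArg (V · ω) (min_eq_left (hρT ω))
  rwa [hstopped, min_eq_left ht] at hW

theorem condExp_stopped_ae_le_of_supermartingale_before {V : ℕ → Ω → ℝ} {T t : ℕ}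
    (hVm : ∀ u ≤ T, StronglyMeasurable[ℱ u] (V u)) (hVi : ∀ u, Integrable (V u) μ)
    {ρ : Ω → ℕ} (hρ : IsStoppingTime ℱ (fun ω => (ρ ω : WithTop ℕ))) (ht : t ≤ T)
    (htρ : ∀ ω, t ≤ ρ ω) (hρT : ∀ ω, ρ ω ≤ T)
    (hstep : ∀ u, t ≤ u → u < T → ∀ᵐ ω ∂μ, u < ρ ω → μ[V (u + 1) | ℱ u] ω ≤ V u ω) :
    μ[fun ω => V (ρ ω) ω | ℱ t] ≤ᵐ[μ] V t := by
  have hneg := ae_le_condExp_stopped_of_submartingale_before (V := -V) (fun u hu => (hVm u hu).neg)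
    (fun u => (hVi u).neg) hρ ht htρ hρT fun u htu huT => by
      filter_upwards [hstep u htu huT, condExp_neg (V (u + 1)) (ℱ u)] with ω hω hω' hlt
      simpa [hω'] using hω hlt
  have hneg_stopped : μ[fun ω => (-V) (ρ ω) ω | ℱ t] =ᵐ[μ] -μ[fun ω => V (ρ ω) ω | ℱ t] :=
    condExp_neg _ _
  filter_upwards [hneg, hneg_stopped] with ω hω hω'
  rw [hω'] at hω
  simpa using hω

end OptionalSampling

section StoppingTime

variable {Ω : Type*} {m0 : MeasurableSpace Ω} {ℱ : Filtration ℕ m0}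

theorem MeasureTheory.IsStoppingTime.measurableSet_eq_of_nat {τ : Ω → ℕ}
    (hτ : IsStoppingTime ℱ (fun ω => (τ ω : WithTop ℕ))) (a : ℕ) :
    MeasurableSet[ℱ a] {ω | τ ω = a} := by
  simpa using hτ.measurableSet_eq a

theorem MeasureTheory.IsStoppingTime.min_of_nat {τ σ : Ω → ℕ}
    (hτ : IsStoppingTime ℱ (fun ω => (τ ω : WithTop ℕ)))
    (hσ : IsStoppingTime ℱ (fun ω => (σ ω : WithTop ℕ))) :
    IsStoppingTime ℱ (fun ω => ((min (τ ω) (σ ω) : ℕ) : WithTop ℕ)) := fun n => by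
  simpa [min_le_iff, Set.ofPred_or] using (hτ n).union (hσ n)

theorem isStoppingTime_sInf_setOf_mem {A : ℕ → Set Ω} (hA : ∀ u, MeasurableSet[ℱ u] (A u))
    (hne : ∀ ω, ∃ u, ω ∈ A u) :
    IsStoppingTime ℱ (fun ω => ((sInf {u | ω ∈ A u} : ℕ) : WithTop ℕ)) := by
  intro n
  have hset : {ω | ((sInf {u | ω ∈ A u} : ℕ) : WithTop ℕ) ≤ n} = ⋃ u ≤ n, A u := by
    ext ω
    simp only [mem_ofPred_eq, Nat.cast_le, mem_iUnion, exists_prop]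
    exact ⟨fun h => ⟨_, h, Nat.sInf_mem (hne ω)⟩, fun ⟨u, hun, hu⟩ => (Nat.sInf_le hu).trans hun⟩
  change MeasurableSet[ℱ n] {ω | ((sInf {u | ω ∈ A u} : ℕ) : WithTop ℕ) ≤ n}
  rw [hset]
  exact MeasurableSet.iUnion fun u => MeasurableSet.iUnion fun hun => ℱ.mono hun _ (hA u)

theorem isStoppingTime_sInf_hitting_eq {V W : ℕ → Ω → ℝ} {t T : ℕ}
    (hV : ∀ u ≤ T, StronglyMeasurable[ℱ u] (V u)) (hW : Adapted ℱ W) (ht : t ≤ T)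
    (hT : ∀ ω, V T ω = W T ω) :
    IsStoppingTime ℱ
      (fun ω => ((sInf {u | t ≤ u ∧ u ≤ T ∧ V u ω = W u ω} : ℕ) : WithTop ℕ)) := by
  refine isStoppingTime_sInf_setOf_mem (A := fun u => {ω | t ≤ u ∧ u ≤ T ∧ V u ω = W u ω})
    (fun u => ?_) fun ω => ⟨T, ht, le_rfl, hT ω⟩
  by_cases hu : t ≤ u ∧ u ≤ T
  · simp only [hu, true_and]
    exact (hV u hu.2).measurableSet_eq_fun (hW u).stronglyMeasurable
  · simp only [← and_assoc, hu, false_and, ofPred_false, MeasurableSet.empty]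

end StoppingTime

theorem hitting_spec_of_eq_sInf {P : ℕ → Prop} {t T n : ℕ}
    (hn : n = sInf {u | t ≤ u ∧ u ≤ T ∧ P u}) (ht : t ≤ T) (hT : P T) :
    n ∈ Icc t T ∧ P n ∧ ∀ u, t ≤ u → u < n → ¬ P u := by
  have hmem : n ∈ {u | t ≤ u ∧ u ≤ T ∧ P u} := by
    rw [hn]
    exact Nat.sInf_mem ⟨T, ht, le_rfl, hT⟩
  exact ⟨⟨hmem.1, hmem.2.1⟩, hmem.2.2, fun u htu hun hu =>
    Nat.notMem_of_lt_sInf (hun.trans_eq hn) ⟨htu, hun.le.trans hmem.2.1, hu⟩⟩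

theorem min_max_le_of_ne {α : Type*} [LinearOrder α] {x y e : α} (hxy : x ≤ y)
    (h : min y (max x e) ≠ x) : min y (max x e) ≤ e := by
  rcases le_total e x with hex | hxe
  · rw [max_eq_left hex, min_eq_right hxy] at h
    exact absurd rfl h
  · exact (min_le_right _ _).trans (max_eq_right hxe).le

theorem le_min_max_of_ne {α : Type*} [LinearOrder α] {x y e : α} (h : min y (max x e) ≠ y) :
    e ≤ min y (max x e) := by
  rcases le_total y (max x e) with hy | hy
  · exact absurd (min_eq_left hy) h
  · exact (min_eq_right hy).symm ▸ le_max_right x e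

section Payoff

variable {Ω : Type*} {X Y Z V : ℕ → Ω → ℝ} {τ σ : Ω → ℕ}

theorem value_min_le_payoffD {ω : Ω} (hτ : V (τ ω) ω = X (τ ω) ω)
    (hXZ : X (σ ω) ω ≤ Z (σ ω) ω) (hVY : V (σ ω) ω ≤ Y (σ ω) ω) :
    V (min (τ ω) (σ ω)) ω ≤ payoffD X Y Z τ σ ω := by
  unfold payoffD
  rcases lt_trichotomy (τ ω) (σ ω) with h | h | h
  · simp [h, h.le, hτ]
  · rw [h] at hτ
    simpa [h, hτ] using hXZ
  · simp [h, h.le, not_lt.2 h.le, hVY]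

theorem payoffD_le_value_min {ω : Ω} (hσ : V (σ ω) ω = Y (σ ω) ω)
    (hXV : X (τ ω) ω ≤ V (τ ω) ω) (hZY : Z (σ ω) ω ≤ Y (σ ω) ω) :
    payoffD X Y Z τ σ ω ≤ V (min (τ ω) (σ ω)) ω := by
  unfold payoffD
  rcases lt_trichotomy (τ ω) (σ ω) with h | h | h
  · simp [h, h.le, hXV]
  · simp [h, hσ, hZY]
  · simp [h, h.le, not_lt.2 h.le, hσ]

theorem sum_indicator_eq_apply_of_le {β : Type*} [AddCommMonoid β] (U : ℕ → ℕ → Ω → β)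
    {N : ℕ} (hτ : ∀ ω, τ ω ≤ N) (hσ : ∀ ω, σ ω ≤ N) :
    ∑ a ∈ Finset.range (N + 1), ∑ b ∈ Finset.range (N + 1),
      ({ω | τ ω = a} ∩ {ω | σ ω = b}).indicator (U a b) = fun ω => U (τ ω) (σ ω) ω := by
  ext ω
  simp [Finset.sum_apply, indicator_apply, ite_and, hτ ω, hσ ω]

theorem integrable_payoffD {m0 : MeasurableSpace Ω} {μ : Measure Ω} {ℱ : Filtration ℕ m0}
    (hXi : ∀ t, Integrable (X t) μ) (hYi : ∀ t, Integrable (Y t) μ)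
    (hZi : ∀ t, Integrable (Z t) μ) (hτ : IsStoppingTime ℱ (fun ω => (τ ω : WithTop ℕ)))
    (hσ : IsStoppingTime ℱ (fun ω => (σ ω : WithTop ℕ))) {N : ℕ} (hτN : ∀ ω, τ ω ≤ N)
    (hσN : ∀ ω, σ ω ≤ N) : Integrable (payoffD X Y Z τ σ) μ := by
  let U : ℕ → ℕ → Ω → ℝ := fun a b => payoffD X Y Z (fun _ => a) (fun _ => b)
  have hU : ∀ a b, Integrable (U a b) μ := fun a b => by
    change Integrable (fun ω => if a < b then X a ω else if b < a then Y b ω else Z b ω) μ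
    split_ifs
    exacts [hXi a, hYi b, hZi b]
  rw [show payoffD X Y Z τ σ = fun ω => U (τ ω) (σ ω) ω from rfl,
    ← sum_indicator_eq_apply_of_le U hτN hσN]
  exact integrable_finsetSum' _ fun a _ => integrable_finsetSum' _ fun b _ =>
    (hU a b).indicator ((ℱ.le a _ (hτ.measurableSet_eq_of_nat a)).inter
      (ℱ.le b _ (hσ.measurableSet_eq_of_nat b)))

end Payoff

section ValueProcess

variable {Ω : Type*} {m0 : MeasurableSpace Ω} {μ : Measure Ω} {ℱ : Filtration ℕ m0}
  {T : ℕ} {X Y Z V : ℕ → Ω → ℝ}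

theorem stronglyMeasurable_value (hXa : Adapted ℱ X) (hYa : Adapted ℱ Y) (hZa : Adapted ℱ Z)
    (hVT : ∀ ω, V T ω = Z T ω)
    (hV : ∀ t, t < T → ∀ ω, V t ω = min (Y t ω) (max (X t ω) ((μ[V (t + 1) | ℱ t]) ω))) :
    ∀ u ≤ T, StronglyMeasurable[ℱ u] (V u) := by
  intro u hu
  rcases hu.lt_or_eq with hu | rfl
  · rw [funext (hV u hu)]
    exact ((hYa u).min ((hXa u).max stronglyMeasurable_condExp.measurable)).stronglyMeasurable
  · rw [funext hVT]
    exact (hZa u).stronglyMeasurable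

theorem value_mem_Icc (hXZ : ∀ t ω, X t ω ≤ Z t ω) (hZY : ∀ t ω, Z t ω ≤ Y t ω)
    (hVT : ∀ ω, V T ω = Z T ω)
    (hV : ∀ t, t < T → ∀ ω, V t ω = min (Y t ω) (max (X t ω) ((μ[V (t + 1) | ℱ t]) ω))) :
    ∀ u ≤ T, ∀ ω, V u ω ∈ Icc (X u ω) (Y u ω) := by
  intro u hu ω
  rcases hu.lt_or_eq with hu | rfl
  · rw [hV u hu ω]
    exact ⟨le_min ((hXZ u ω).trans (hZY u ω)) (le_max_left _ _), min_le_left _ _⟩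
  · rw [hVT ω]
    exact ⟨hXZ u ω, hZY u ω⟩

theorem value_ae_le_condExp_payoffD [IsFiniteMeasure μ]
    (hVm : ∀ u ≤ T, StronglyMeasurable[ℱ u] (V u)) (hVi : ∀ u, Integrable (V u) μ)
    (hXi : ∀ u, Integrable (X u) μ) (hYi : ∀ u, Integrable (Y u) μ)
    (hZi : ∀ u, Integrable (Z u) μ) (hXZ : ∀ u ω, X u ω ≤ Z u ω) (hZY : ∀ u ω, Z u ω ≤ Y u ω)
    (hVY : ∀ u ≤ T, ∀ ω, V u ω ≤ Y u ω)
    (hV : ∀ u, u < T → ∀ ω, V u ω = min (Y u ω) (max (X u ω) ((μ[V (u + 1) | ℱ u]) ω)))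
    {t : ℕ} (ht : t ≤ T) {τ σ : Ω → ℕ} (hτ : IsStoppingTime ℱ (fun ω => (τ ω : WithTop ℕ)))
    (hτI : ∀ ω, τ ω ∈ Icc t T) (hτX : ∀ ω, V (τ ω) ω = X (τ ω) ω)
    (hτ_lt : ∀ ω u, t ≤ u → u < τ ω → ¬ V u ω = X u ω)
    (hσ : IsStoppingTime ℱ (fun ω => (σ ω : WithTop ℕ))) (hσI : ∀ ω, σ ω ∈ Icc t T) :
    V t ≤ᵐ[μ] μ[payoffD X Y Z τ σ | ℱ t] := by
  have hρ := hτ.min_of_nat hσ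
  have hρT : ∀ ω, min (τ ω) (σ ω) ≤ T := fun ω => min_le_of_left_le (hτI ω).2
  calc V t ≤ᵐ[μ] μ[fun ω => V (min (τ ω) (σ ω)) ω | ℱ t] :=
        ae_le_condExp_stopped_of_submartingale_before hVm hVi hρ ht
          (fun ω => le_min (hτI ω).1 (hσI ω).1) hρT fun u htu huT => ae_of_all μ fun ω hu => by
            have hne := hτ_lt ω u htu (lt_min_iff.1 hu).1
            rw [hV u huT ω] at hne ⊢
            exact min_max_le_of_ne ((hXZ u ω).trans (hZY u ω)) hne
    _ ≤ᵐ[μ] μ[payoffD X Y Z τ σ | ℱ t] :=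
        condExp_mono (integrable_stoppedValue ℕ hρ hVi fun ω => Nat.cast_le.2 (hρT ω))
          (integrable_payoffD hXi hYi hZi hτ hσ (fun ω => (hτI ω).2) fun ω => (hσI ω).2)
          (ae_of_all μ fun ω => value_min_le_payoffD (hτX ω) (hXZ _ ω) (hVY _ (hσI ω).2 ω))

theorem condExp_payoffD_ae_le_value [IsFiniteMeasure μ]
    (hVm : ∀ u ≤ T, StronglyMeasurable[ℱ u] (V u)) (hVi : ∀ u, Integrable (V u) μ)
    (hXi : ∀ u, Integrable (X u) μ) (hYi : ∀ u, Integrable (Y u) μ)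
    (hZi : ∀ u, Integrable (Z u) μ) (hZY : ∀ u ω, Z u ω ≤ Y u ω)
    (hXV : ∀ u ≤ T, ∀ ω, X u ω ≤ V u ω)
    (hV : ∀ u, u < T → ∀ ω, V u ω = min (Y u ω) (max (X u ω) ((μ[V (u + 1) | ℱ u]) ω)))
    {t : ℕ} (ht : t ≤ T) {τ σ : Ω → ℕ} (hσ : IsStoppingTime ℱ (fun ω => (σ ω : WithTop ℕ)))
    (hσI : ∀ ω, σ ω ∈ Icc t T) (hσY : ∀ ω, V (σ ω) ω = Y (σ ω) ω)
    (hσ_lt : ∀ ω u, t ≤ u → u < σ ω → ¬ V u ω = Y u ω)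
    (hτ : IsStoppingTime ℱ (fun ω => (τ ω : WithTop ℕ))) (hτI : ∀ ω, τ ω ∈ Icc t T) :
    μ[payoffD X Y Z τ σ | ℱ t] ≤ᵐ[μ] V t := by
  have hρ := hτ.min_of_nat hσ
  have hρT : ∀ ω, min (τ ω) (σ ω) ≤ T := fun ω => min_le_of_left_le (hτI ω).2
  calc μ[payoffD X Y Z τ σ | ℱ t] ≤ᵐ[μ] μ[fun ω => V (min (τ ω) (σ ω)) ω | ℱ t] :=
        condExp_mono
          (integrable_payoffD hXi hYi hZi hτ hσ (fun ω => (hτI ω).2) fun ω => (hσI ω).2)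
          (integrable_stoppedValue ℕ hρ hVi fun ω => Nat.cast_le.2 (hρT ω))
          (ae_of_all μ fun ω => payoffD_le_value_min (hσY ω) (hXV _ (hτI ω).2 ω) (hZY _ ω))
    _ ≤ᵐ[μ] V t :=
        condExp_stopped_ae_le_of_supermartingale_before hVm hVi hρ ht
          (fun ω => le_min (hτI ω).1 (hσI ω).1) hρT fun u htu huT => ae_of_all μ fun ω hu => by
            have hne := hσ_lt ω u htu (lt_min_iff.1 hu).2
            rw [hV u huT ω] at hne ⊢
            exact le_min_max_of_ne hne

end ValueProcess

/-- In the discrete-time standard Dynkin game with `X ≤ Z ≤ Y`, the hitting times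
`τ*_t = min {u ∈ [t,T] : V_u = X_u}` and `σ*_t = min {u ∈ [t,T] : V_u = Y_u}` form a
Nash equilibrium. -/
theorem stmt2 {Ω : Type*} {m0 : MeasurableSpace Ω} (μ : Measure Ω) [IsProbabilityMeasure μ]
    (ℱ : Filtration ℕ m0) (T : ℕ)
    (X Y Z V : ℕ → Ω → ℝ)
    (hXa : Adapted ℱ X) (hYa : Adapted ℱ Y) (hZa : Adapted ℱ Z)
    (hXi : ∀ t, Integrable (X t) μ) (hYi : ∀ t, Integrable (Y t) μ)
    (hZi : ∀ t, Integrable (Z t) μ) (hVi : ∀ t, Integrable (V t) μ)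
    (hXZ : ∀ t ω, X t ω ≤ Z t ω) (hZY : ∀ t ω, Z t ω ≤ Y t ω)
    (htermX : ∀ ω, X T ω = Z T ω) (htermY : ∀ ω, Z T ω = Y T ω)
    (hVT : ∀ ω, V T ω = Z T ω)
    (hV : ∀ t, t < T → ∀ ω, V t ω = min (Y t ω) (max (X t ω) ((μ[V (t + 1) | ℱ t]) ω)))
    (t : ℕ) (ht : t ≤ T)
    (τs σs : Ω → ℕ)
    (hτs : ∀ ω, τs ω = sInf {u | t ≤ u ∧ u ≤ T ∧ V u ω = X u ω})
    (hσs : ∀ ω, σs ω = sInf {u | t ≤ u ∧ u ≤ T ∧ V u ω = Y u ω}) :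
    IsStoppingTime ℱ (fun ω => (τs ω : WithTop ℕ)) ∧ IsStoppingTime ℱ (fun ω => (σs ω : WithTop ℕ)) ∧
    (∀ ω, τs ω ∈ Set.Icc t T) ∧ (∀ ω, σs ω ∈ Set.Icc t T) ∧
    (∀ τ σ : Ω → ℕ, IsStoppingTime ℱ (fun ω => (τ ω : WithTop ℕ)) → IsStoppingTime ℱ (fun ω => (σ ω : WithTop ℕ)) →
      (∀ ω, τ ω ∈ Set.Icc t T) → (∀ ω, σ ω ∈ Set.Icc t T) →
      (μ[payoffD X Y Z τs σs | ℱ t] ≤ᵐ[μ] μ[payoffD X Y Z τs σ | ℱ t]) ∧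
      (μ[payoffD X Y Z τ σs | ℱ t] ≤ᵐ[μ] μ[payoffD X Y Z τs σs | ℱ t])) := by
  have hVm := stronglyMeasurable_value hXa hYa hZa hVT hV
  have hXVY := value_mem_Icc hXZ hZY hVT hV
  have hVXT : ∀ ω, V T ω = X T ω := fun ω => (hVT ω).trans (htermX ω).symm
  have hVYT : ∀ ω, V T ω = Y T ω := fun ω => (hVT ω).trans (htermY ω)
  choose hτI hτX hτ_lt using fun ω => hitting_spec_of_eq_sInf (hτs ω) ht (hVXT ω)
  choose hσI hσY hσ_lt using fun ω => hitting_spec_of_eq_sInf (hσs ω) ht (hVYT ω)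
  have hτst : IsStoppingTime ℱ (fun ω => (τs ω : WithTop ℕ)) := by
    simpa only [hτs] using isStoppingTime_sInf_hitting_eq hVm hXa ht hVXT
  have hσst : IsStoppingTime ℱ (fun ω => (σs ω : WithTop ℕ)) := by
    simpa only [hσs] using isStoppingTime_sInf_hitting_eq hVm hYa ht hVYT
  have hlow : ∀ σ : Ω → ℕ, IsStoppingTime ℱ (fun ω => (σ ω : WithTop ℕ)) →
      (∀ ω, σ ω ∈ Icc t T) → V t ≤ᵐ[μ] μ[payoffD X Y Z τs σ | ℱ t] := fun σ hσ hσI' =>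
    value_ae_le_condExp_payoffD hVm hVi hXi hYi hZi hXZ hZY (fun u hu ω => (hXVY u hu ω).2) hV
      ht hτst hτI hτX hτ_lt hσ hσI'
  have hup : ∀ τ : Ω → ℕ, IsStoppingTime ℱ (fun ω => (τ ω : WithTop ℕ)) →
      (∀ ω, τ ω ∈ Icc t T) → μ[payoffD X Y Z τ σs | ℱ t] ≤ᵐ[μ] V t := fun τ hτ hτI' =>
    condExp_payoffD_ae_le_value hVm hVi hXi hYi hZi hZY (fun u hu ω => (hXVY u hu ω).1) hV
      ht hσst hσI hσY hσ_lt hτ hτI'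
  exact ⟨hτst, hσst, hτI, hσI, fun τ σ hτ hσ hτI' hσI' =>
    ⟨(hup τs hτst hτI).trans (hlow σ hσ hσI'), (hup τ hτ hτI').trans (hlow σs hσst hσI)⟩⟩
end

section
/- In the discrete-time standard Dynkin game with X ≤ Z ≤ Y, the value process V stopped at τ*_t ∧ σ*_t is a martingale on {t,...,T}: for t ≤ s < T, E[V_{(s+1) ∧ τ*_t ∧ σ*_t} | F_s] = V_{s ∧ τ*_t ∧ σ*_t}. -/
/-!
Both first hitting times are stopping times: the events `{V u = X u}` and `{V u = Y u}` are
`ℱ u`-measurable for `u ≤ T`, and both happen at `T` since `V T = X T = Y T`. Let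
`φ = τ*_t ∧ σ*_t`. On `{φ ≤ s}` both sides equal `V φ`, which is `ℱ s`-measurable. On `{s < φ}`,
`V s` differs from both `X s` and `Y s`, so the recursion
`V s = min (Y s) (max (X s) E[V (s+1) | ℱ s])` forces `V s = E[V (s+1) | ℱ s]`; since
`{s < φ} ∈ ℱ s`, the conditional expectation respects this splitting.
-/

open MeasureTheory Filter Set

section

variable {Ω : Type*} {m0 : MeasurableSpace Ω} {μ : Measure Ω} {ℱ : Filtration ℕ m0}

lemma min_max_eq_right_of_ne {α : Type*} [LinearOrder α] {a b c : α}
    (ha : min a (max b c) ≠ a) (hb : min a (max b c) ≠ b) : min a (max b c) = c := by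
  rcases min_choice a (max b c) with h | h
  · exact absurd h ha
  rw [h] at hb ⊢
  exact (max_choice b c).resolve_left hb

lemma isStoppingTime_of_eq_sInf {P : ℕ → Ω → Prop} {t T : ℕ} {τ : Ω → ℕ}
    (hτ : ∀ ω, τ ω = sInf {u | t ≤ u ∧ u ≤ T ∧ P u ω})
    (hP : ∀ u ≤ T, MeasurableSet[ℱ u] {ω | P u ω})
    (hne : ∀ ω, ∃ u, t ≤ u ∧ u ≤ T ∧ P u ω) :
    IsStoppingTime ℱ fun ω => (τ ω : WithTop ℕ) := by
  intro i
  show MeasurableSet[ℱ i] {ω | (τ ω : WithTop ℕ) ≤ i}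
  have hset : {ω | (τ ω : WithTop ℕ) ≤ i} = ⋃ j ∈ Finset.Icc t (min i T), {ω | P j ω} := by
    ext ω
    simp only [Nat.cast_le, hτ, mem_ofPred_eq, mem_iUnion, Finset.mem_Icc, le_min_iff,
      exists_prop]
    constructor
    · intro h
      obtain ⟨htu, huT, hPu⟩ := Nat.sInf_mem (hne ω)
      exact ⟨_, ⟨htu, h, huT⟩, hPu⟩
    · rintro ⟨j, ⟨htj, hji, hjT⟩, hPj⟩
      exact (Nat.sInf_le (show j ∈ {u | t ≤ u ∧ u ≤ T ∧ P u ω} from ⟨htj, hjT, hPj⟩)).trans hji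
  rw [hset]
  exact Finset.measurableSet_biUnion _ fun j hj =>
    have ⟨_, hji, hjT⟩ : t ≤ j ∧ j ≤ i ∧ j ≤ T := by simpa using hj
    ℱ.mono hji _ (hP j hjT)

lemma stronglyMeasurable_stopped_of_le {V : ℕ → Ω → ℝ} {φ : Ω → ℕ} {s : ℕ}
    (hVm : ∀ u ≤ s, Measurable[ℱ u] (V u)) (hφ : IsStoppingTime ℱ fun ω => (φ ω : WithTop ℕ))
    (hφs : ∀ ω, φ ω ≤ s) : StronglyMeasurable[ℱ s] fun ω => V (φ ω) ω := by
  set W : ℕ → Ω → ℝ := fun u => V (min u s)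
  have hWa : Adapted ℱ W := fun u =>
    (hVm _ (min_le_right u s)).mono (ℱ.mono (min_le_left u s)) le_rfl
  have hWV : stoppedValue W (fun ω => (φ ω : WithTop ℕ)) = fun ω => V (φ ω) ω :=
    funext fun ω => congrArg (V · ω) (min_eq_left (hφs ω))
  exact hWV ▸ stronglyMeasurable_stoppedValue_of_le
    hWa.stronglyAdapted.isStronglyProgressive_of_discrete hφ fun ω => WithTop.coe_le_coe.2 (hφs ω)

lemma condExp_stopped_succ_ae_eq [IsFiniteMeasure μ] {V : ℕ → Ω → ℝ} {φ : Ω → ℕ} {s : ℕ}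
    (hVm : ∀ u ≤ s, Measurable[ℱ u] (V u)) (hVi : ∀ u, Integrable (V u) μ)
    (hφ : IsStoppingTime ℱ fun ω => (φ ω : WithTop ℕ))
    (hmart : ∀ ω, s < φ ω → V s ω = (μ[V (s + 1) | ℱ s]) ω) :
    μ[fun ω => V (min (s + 1) (φ ω)) ω | ℱ s] =ᵐ[μ] fun ω => V (min s (φ ω)) ω := by
  set A := {ω | s < φ ω}
  set stopped := fun ω => V (min s (φ ω)) ω
  have hA : MeasurableSet[ℱ s] A := by
    convert hφ.measurableSet_gt s using 2 with ω
    simp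
  have hstop : IsStoppingTime ℱ fun ω => ((min s (φ ω) : ℕ) : WithTop ℕ) :=
    (isStoppingTime_const ℱ s).min hφ
  have hstop_le : ∀ ω, ((min s (φ ω) : ℕ) : WithTop ℕ) ≤ s :=
    fun ω => WithTop.coe_le_coe.2 (min_le_left _ _)
  have hstopped_meas : StronglyMeasurable[ℱ s] stopped :=
    stronglyMeasurable_stopped_of_le hVm hstop fun ω => min_le_left _ _
  have hstopped_int : Integrable stopped μ := integrable_stoppedValue ℕ hstop hVi hstop_le
  have hAc_int : Integrable (Aᶜ.indicator stopped) μ := hstopped_int.indicator (ℱ.le s _ hA.compl)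
  have hdecomp : (fun ω => V (min (s + 1) (φ ω)) ω)
      = Aᶜ.indicator stopped + A.indicator (V (s + 1)) := by
    ext ω
    by_cases hω : s < φ ω
    · simp [A, hω]
    · have hφs : φ ω ≤ s := not_lt.1 hω
      simp [A, stopped, hω, min_eq_right hφs, min_eq_right (hφs.trans s.le_succ)]
  calc μ[fun ω => V (min (s + 1) (φ ω)) ω | ℱ s]
      = μ[Aᶜ.indicator stopped + A.indicator (V (s + 1)) | ℱ s] := by rw [hdecomp]
    _ =ᵐ[μ] μ[Aᶜ.indicator stopped | ℱ s] + μ[A.indicator (V (s + 1)) | ℱ s] :=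
      condExp_add hAc_int ((hVi _).indicator (ℱ.le s _ hA)) _
    _ =ᵐ[μ] Aᶜ.indicator stopped + A.indicator (μ[V (s + 1) | ℱ s]) :=
      (EventuallyEq.of_eq (condExp_of_stronglyMeasurable (ℱ.le s)
        (hstopped_meas.indicator hA.compl) hAc_int)).add (condExp_indicator (hVi _) hA)
    _ = stopped := by
      ext ω
      by_cases hω : s < φ ω
      · simp [A, stopped, hω, min_eq_left hω.le, hmart ω hω]
      · simp [A, hω]

end

theorem stmt4_general {Ω : Type*} {m0 : MeasurableSpace Ω} (μ : Measure Ω) [IsProbabilityMeasure μ]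
    (ℱ : Filtration ℕ m0) (T : ℕ)
    (X Y Z V : ℕ → Ω → ℝ)
    (hXa : Adapted ℱ X) (hYa : Adapted ℱ Y)
    (hVi : ∀ t, Integrable (V t) μ)
    (htermX : ∀ ω, X T ω = Z T ω) (htermY : ∀ ω, Z T ω = Y T ω)
    (hVT : ∀ ω, V T ω = Z T ω)
    (hV : ∀ t, t < T → ∀ ω, V t ω = min (Y t ω) (max (X t ω) ((μ[V (t + 1) | ℱ t]) ω)))
    (t : ℕ)
    (τs σs : Ω → ℕ)
    (hτs : ∀ ω, τs ω = sInf {u | t ≤ u ∧ u ≤ T ∧ V u ω = X u ω})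
    (hσs : ∀ ω, σs ω = sInf {u | t ≤ u ∧ u ≤ T ∧ V u ω = Y u ω}) :
    ∀ s, t ≤ s → s < T →
      (μ[fun ω => V (min (s + 1) (min (τs ω) (σs ω))) ω | ℱ s])
        =ᵐ[μ] fun ω => V (min s (min (τs ω) (σs ω))) ω := by
  intro s hts hsT
  have hVm : ∀ u ≤ T, Measurable[ℱ u] (V u) := by
    intro u hu
    rcases hu.lt_or_eq with hu | rfl
    · rw [funext (hV u hu)]
      exact (hYa u).min ((hXa u).max stronglyMeasurable_condExp.measurable)
    · rw [funext fun ω => (hVT ω).trans (htermX ω).symm]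
      exact hXa _
  have hτ : IsStoppingTime ℱ fun ω => (τs ω : WithTop ℕ) :=
    isStoppingTime_of_eq_sInf hτs (fun u hu => measurableSet_eq_fun (hVm u hu) (hXa u))
      fun ω => ⟨T, hts.trans hsT.le, le_rfl, by rw [hVT, htermX]⟩
  have hσ : IsStoppingTime ℱ fun ω => (σs ω : WithTop ℕ) :=
    isStoppingTime_of_eq_sInf hσs (fun u hu => measurableSet_eq_fun (hVm u hu) (hYa u))
      fun ω => ⟨T, hts.trans hsT.le, le_rfl, by rw [hVT, htermY]⟩
  have hmart : ∀ ω, s < min (τs ω) (σs ω) → V s ω = (μ[V (s + 1) | ℱ s]) ω := by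
    intro ω hω
    have hX : V s ω ≠ X s ω := fun h =>
      (lt_min_iff.1 hω).1.not_ge (hτs ω ▸ Nat.sInf_le ⟨hts, hsT.le, h⟩)
    have hY : V s ω ≠ Y s ω := fun h =>
      (lt_min_iff.1 hω).2.not_ge (hσs ω ▸ Nat.sInf_le ⟨hts, hsT.le, h⟩)
    rw [hV s hsT ω] at hX hY ⊢
    exact min_max_eq_right_of_ne hY hX
  exact condExp_stopped_succ_ae_eq (fun u hu => hVm u (hu.trans hsT.le)) hVi (hτ.min hσ) hmart

/-- In the discrete-time standard Dynkin game with `X ≤ Z ≤ Y`, the value process `V`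
stopped at `τ*_t ∧ σ*_t` is a martingale on `{t, ..., T}`: for `t ≤ s < T`,
`E[V_{(s+1) ∧ τ*_t ∧ σ*_t} | ℱ s] = V_{s ∧ τ*_t ∧ σ*_t}` a.s. -/
theorem stmt4 {Ω : Type*} {m0 : MeasurableSpace Ω} (μ : Measure Ω) [IsProbabilityMeasure μ]
    (ℱ : Filtration ℕ m0) (T : ℕ)
    (X Y Z V : ℕ → Ω → ℝ)
    (hXa : Adapted ℱ X) (hYa : Adapted ℱ Y) (hZa : Adapted ℱ Z)
    (hXi : ∀ t, Integrable (X t) μ) (hYi : ∀ t, Integrable (Y t) μ)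
    (hZi : ∀ t, Integrable (Z t) μ) (hVi : ∀ t, Integrable (V t) μ)
    (hXZ : ∀ t ω, X t ω ≤ Z t ω) (hZY : ∀ t ω, Z t ω ≤ Y t ω)
    (htermX : ∀ ω, X T ω = Z T ω) (htermY : ∀ ω, Z T ω = Y T ω)
    (hVT : ∀ ω, V T ω = Z T ω)
    (hV : ∀ t, t < T → ∀ ω, V t ω = min (Y t ω) (max (X t ω) ((μ[V (t + 1) | ℱ t]) ω)))
    (t : ℕ) (ht : t ≤ T)
    (τs σs : Ω → ℕ)
    (hτs : ∀ ω, τs ω = sInf {u | t ≤ u ∧ u ≤ T ∧ V u ω = X u ω})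
    (hσs : ∀ ω, σs ω = sInf {u | t ≤ u ∧ u ≤ T ∧ V u ω = Y u ω}) :
    ∀ s, t ≤ s → s < T →
      (μ[fun ω => V (min (s + 1) (min (τs ω) (σs ω))) ω | ℱ s])
        =ᵐ[μ] fun ω => V (min s (min (τs ω) (σs ω))) ω :=
  stmt4_general μ ℱ T X Y Z V hXa hYa hVi htermX htermY hVT hV t τs σs hτs hσs
end

section
/- If V* is the value process of a general discrete-time Dynkin game with payoffs X, Y, Z and (τ*_t, σ*_t) are optimal stopping times, then with L = X ∧ Z and U = Y ∨ Z: (i) L_t ≤ V*_t ≤ U_t; (ii) V*_t = L_t on {τ*_t = t} and V*_t = U_t on {σ*_t = t}; (iii) L_t ≤ E[V*_{t+1}|F_t] ≤ U_t on {τ*_t ∧ σ*_t > t}. -/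
open MeasureTheory Filter Set

/-!
Everything happens pointwise in `ω`. The four cases of the equilibrium characterization
(who stops at `t`) each pin `V*_t` to one of `X_t`, `Y_t`, `Z_t`, `E[V*_{t+1} | ℱ t]` and order
the remaining payoffs around it, which is all that is needed to locate `V*_t` and the
continuation value between `X_t ∧ Z_t` and `Y_t ∨ Z_t`.
-/

section OnePeriodGame

variable {ι α : Type*} [LinearOrder ι] [LinearOrder α]

/-- `a` and `b` are the stopping times of the sup- and the inf-player, who get `x` resp. `y`
when stopping first and `z` when stopping together; `v` is the value and `p` the continuation
value `E[V*_{t+1} | ℱ t]`. -/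
def OnePeriodNash (t a b : ι) (x y z v p : α) : Prop :=
  (a = t ∧ b = t → y ≤ v ∧ v = z ∧ z ≤ x) ∧
  (a = t ∧ t < b → p ≤ v ∧ v = x ∧ x ≤ z) ∧
  (t < a ∧ b = t → z ≤ v ∧ v = y ∧ y ≤ p) ∧
  (t < a ∧ t < b → x ≤ v ∧ v = p ∧ p ≤ y)

variable {x y z v p : α}

theorem min_eq_and_max_eq_of_le_of_eq_of_le (hyv : y ≤ v) (hvz : v = z) (hzx : z ≤ x) :
    min x z = v ∧ max y z = v := by
  subst hvz
  exact ⟨min_eq_right hzx, max_eq_right hyv⟩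

theorem min_eq_and_le_max_of_eq_of_le (hvx : v = x) (hxz : x ≤ z) :
    min x z = v ∧ v ≤ max y z := by
  subst hvx
  exact ⟨min_eq_left hxz, hxz.trans (le_max_right y z)⟩

theorem max_eq_and_min_le_of_le_of_eq (hzv : z ≤ v) (hvy : v = y) :
    max y z = v ∧ min x z ≤ v := by
  subst hvy
  exact ⟨max_eq_left hzv, (min_le_right x z).trans hzv⟩

theorem min_le_and_le_max_of_le_of_le (hxp : x ≤ p) (hpy : p ≤ y) :
    min x z ≤ p ∧ p ≤ max y z :=
  ⟨(min_le_left x z).trans hxp, hpy.trans (le_max_left y z)⟩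

theorem OnePeriodNash.value_bounds {t a b : ι} (h : OnePeriodNash t a b x y z v p)
    (hta : t ≤ a) (htb : t ≤ b) :
    (min x z ≤ v ∧ v ≤ max y z) ∧
      (a = t → v = min x z) ∧
      (b = t → v = max y z) ∧
      (t < a ∧ t < b → min x z ≤ p ∧ p ≤ max y z) := by
  obtain ⟨hboth, hmin, hmax, hcont⟩ := h
  rcases hta.eq_or_lt with rfl | hta <;> rcases htb.eq_or_lt with rfl | htb
  · obtain ⟨hL, hU⟩ := min_eq_and_max_eq_of_le_of_eq_of_le (hboth ⟨rfl, rfl⟩).1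
      (hboth ⟨rfl, rfl⟩).2.1 (hboth ⟨rfl, rfl⟩).2.2
    exact ⟨⟨hL.le, hU.ge⟩, fun _ => hL.symm, fun _ => hU.symm, fun h => (lt_irrefl _ h.1).elim⟩
  · obtain ⟨-, hvx, hxz⟩ := hmin ⟨rfl, htb⟩
    obtain ⟨hL, hU⟩ := min_eq_and_le_max_of_eq_of_le (y := y) hvx hxz
    exact ⟨⟨hL.le, hU⟩, fun _ => hL.symm, fun h => (htb.ne' h).elim,
      fun h => (lt_irrefl _ h.1).elim⟩
  · obtain ⟨hzv, hvy, -⟩ := hmax ⟨hta, rfl⟩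
    obtain ⟨hU, hL⟩ := max_eq_and_min_le_of_le_of_eq (x := x) hzv hvy
    exact ⟨⟨hL, hU.ge⟩, fun h => (hta.ne' h).elim, fun _ => hU.symm,
      fun h => (lt_irrefl _ h.2).elim⟩
  · obtain ⟨hxv, hvp, hpy⟩ := hcont ⟨hta, htb⟩
    exact ⟨min_le_and_le_max_of_le_of_le hxv (hvp ▸ hpy), fun h => (hta.ne' h).elim,
      fun h => (htb.ne' h).elim, fun _ => min_le_and_le_max_of_le_of_le (hvp ▸ hxv) hpy⟩

end OnePeriodGame

theorem stmt6_general {Ω : Type*} {m0 : MeasurableSpace Ω} (μ : Measure Ω)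
    (T : ℕ)
    (X Y Z Vs : ℕ → Ω → ℝ)
    (t : ℕ)
    (τs σs : Ω → ℕ)
    (hτr : ∀ ω, τs ω ∈ Set.Icc t T) (hσr : ∀ ω, σs ω ∈ Set.Icc t T)
    (P : Ω → ℝ)
    -- the Nash equilibrium characterization of the one-period embedded game:
    (hchar : ∀ᵐ ω ∂μ,
      (τs ω = t ∧ σs ω = t →
        Y t ω ≤ Vs t ω ∧ Vs t ω = Z t ω ∧ Z t ω ≤ X t ω) ∧
      (τs ω = t ∧ t < σs ω →
        P ω ≤ Vs t ω ∧ Vs t ω = X t ω ∧ X t ω ≤ Z t ω) ∧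
      (t < τs ω ∧ σs ω = t →
        Z t ω ≤ Vs t ω ∧ Vs t ω = Y t ω ∧ Y t ω ≤ P ω) ∧
      (t < τs ω ∧ t < σs ω →
        X t ω ≤ Vs t ω ∧ Vs t ω = P ω ∧ P ω ≤ Y t ω)) :
    ∀ᵐ ω ∂μ,
      (min (X t ω) (Z t ω) ≤ Vs t ω ∧ Vs t ω ≤ max (Y t ω) (Z t ω)) ∧
      (τs ω = t → Vs t ω = min (X t ω) (Z t ω)) ∧
      (σs ω = t → Vs t ω = max (Y t ω) (Z t ω)) ∧
      (t < τs ω ∧ t < σs ω →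
        min (X t ω) (Z t ω) ≤ P ω ∧ P ω ≤ max (Y t ω) (Z t ω)) := by
  filter_upwards [hchar] with ω hnash
  exact OnePeriodNash.value_bounds hnash (hτr ω).1 (hσr ω).1

/-- If `V*` is the value process of a general discrete-time Dynkin game with payoffs
`X, Y, Z` and `(τ*_t, σ*_t)` are optimal stopping times (satisfying the Nash equilibrium
characterization of the one-period embedded game), then with `L = X ∧ Z`, `U = Y ∨ Z`
and `P_t = E[V*_{t+1} | ℱ t]`:
(i) `L_t ≤ V*_t ≤ U_t`;
(ii) `V*_t = L_t` on `{τ*_t = t}` and `V*_t = U_t` on `{σ*_t = t}`;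
(iii) `L_t ≤ P_t ≤ U_t` on `{τ*_t ∧ σ*_t > t}`. -/
theorem stmt6 {Ω : Type*} {m0 : MeasurableSpace Ω} (μ : Measure Ω) [IsProbabilityMeasure μ]
    (ℱ : Filtration ℕ m0) (T : ℕ)
    (X Y Z Vs : ℕ → Ω → ℝ)
    (hXa : Adapted ℱ X) (hYa : Adapted ℱ Y) (hZa : Adapted ℱ Z)
    (hXi : ∀ s, Integrable (X s) μ) (hYi : ∀ s, Integrable (Y s) μ)
    (hZi : ∀ s, Integrable (Z s) μ)
    (htermX : ∀ ω, X T ω = Z T ω) (htermY : ∀ ω, Y T ω = Z T ω)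
    (t : ℕ) (ht : t ≤ T)
    (τs σs : Ω → ℕ)
    (hτst : IsStoppingTime ℱ (fun ω => (τs ω : WithTop ℕ))) (hσst : IsStoppingTime ℱ (fun ω => (σs ω : WithTop ℕ)))
    (hτr : ∀ ω, τs ω ∈ Set.Icc t T) (hσr : ∀ ω, σs ω ∈ Set.Icc t T)
    (P : Ω → ℝ) (hP : P = μ[Vs (t + 1) | ℱ t])
    -- the Nash equilibrium characterization of the one-period embedded game:
    (hchar : ∀ᵐ ω ∂μ,
      (τs ω = t ∧ σs ω = t →
        Y t ω ≤ Vs t ω ∧ Vs t ω = Z t ω ∧ Z t ω ≤ X t ω) ∧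
      (τs ω = t ∧ t < σs ω →
        P ω ≤ Vs t ω ∧ Vs t ω = X t ω ∧ X t ω ≤ Z t ω) ∧
      (t < τs ω ∧ σs ω = t →
        Z t ω ≤ Vs t ω ∧ Vs t ω = Y t ω ∧ Y t ω ≤ P ω) ∧
      (t < τs ω ∧ t < σs ω →
        X t ω ≤ Vs t ω ∧ Vs t ω = P ω ∧ P ω ≤ Y t ω)) :
    ∀ᵐ ω ∂μ,
      (min (X t ω) (Z t ω) ≤ Vs t ω ∧ Vs t ω ≤ max (Y t ω) (Z t ω)) ∧
      (τs ω = t → Vs t ω = min (X t ω) (Z t ω)) ∧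
      (σs ω = t → Vs t ω = max (Y t ω) (Z t ω)) ∧
      (t < τs ω ∧ t < σs ω →
        min (X t ω) (Z t ω) ≤ P ω ∧ P ω ≤ max (Y t ω) (Z t ω)) :=
  stmt6_general (m0 := m0) μ T X Y Z Vs t τs σs hτr hσr P hchar
end

section
/- For the general discrete-time Dynkin game with payoff R(τ,σ) = X_τ 1{τ<σ} + Y_σ 1{σ<τ} + Z_σ 1{σ=τ} and the modified payoff R̃(τ,σ) = L_τ 1{τ<σ} + U_σ 1{σ<τ} + Z_σ 1{σ=τ} where L = X ∧ Z and U = Y ∨ Z: for any stopping times τ, σ there exists a stopping time τ̂ such that R(τ̂, σ) ≥ R̃(τ, σ) pointwise almost surely. Specifically, τ̂ = σ on {σ < τ, Z_σ > Y_σ} and τ̂ = τ otherwise is a stopping time achieving this. -/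
/-!
The event `A = {σ < τ, Y_σ < Z_σ}` lies in `ℱ_{σ ∧ τ}`, and `τ̂` equals `σ ∧ τ` on `A` and `τ` off
`A`; switching from `τ` to an earlier stopping time on an event of the earlier time's σ-algebra
gives a stopping time. Pointwise, on `A` both payoffs equal `Z_σ = Y_σ ∨ Z_σ`; off `A`, `τ̂ = τ`
and `R` dominates `R̃` termwise, as `X ∧ Z ≤ X` and `Y_σ ∨ Z_σ = Y_σ` there.
-/

open MeasureTheory Filter Set
open scoped Classical

namespace MeasureTheory.IsStoppingTime

variable {Ω ι : Type*} {m : MeasurableSpace Ω} {τ π : Ω → WithTop ι}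

theorem piecewise_of_le_of_measurableSet [Preorder ι] {f : Filtration ι m}
    (hτ : IsStoppingTime f τ) (hπ : IsStoppingTime f π) (hle : τ ≤ π) {s : Set Ω}
    [DecidablePred (· ∈ s)] (hs : MeasurableSet[hτ.measurableSpace] s) :
    IsStoppingTime f (s.piecewise τ π) := by
  intro i
  have hset : {ω | s.piecewise τ π ω ≤ i} =
      s ∩ {ω | τ ω ≤ i} ∪ (sᶜ ∩ {ω | τ ω ≤ i}) ∩ {ω | π ω ≤ i} := by
    ext ω
    by_cases hω : ω ∈ s
    · simp [hω]
    · simpa [hω] using fun h => (hle ω).trans h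
  rw [hset]
  exact (hs.2 i).union ((hτ.measurableSpace.measurableSet_compl s hs).2 i |>.inter (hπ i))

theorem measurableSet_inter_lt [LinearOrder ι] [TopologicalSpace ι] [SecondCountableTopology ι]
    [OrderTopology ι] {f : Filtration ι m} (hτ : IsStoppingTime f τ) (hπ : IsStoppingTime f π)
    {s : Set Ω} (hs : MeasurableSet[hτ.measurableSpace] s) :
    MeasurableSet[(hτ.min hπ).measurableSpace] (s ∩ {ω | τ ω < π ω}) := by
  have hlt : MeasurableSet[(hτ.min hπ).measurableSpace] {ω | τ ω < π ω} := by
    simp_rw [← not_le]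
    exact ((measurableSet_min_iff hτ hπ _).2
      ⟨measurableSet_stopping_time_le hπ hτ, measurableSet_le_stopping_time hπ hτ⟩).compl
  have hsub : {ω | τ ω < π ω} = {ω | τ ω ≤ π ω} ∩ {ω | τ ω < π ω} := by
    ext ω
    simp only [mem_inter_iff, mem_ofPred_eq]
    exact ⟨fun h => ⟨h.le, h⟩, And.right⟩
  rw [hsub, ← inter_assoc]
  exact (measurableSet_inter_le hτ hπ s hs).inter hlt

end MeasureTheory.IsStoppingTime

theorem isStoppingTime_ite_lt_and_lt {Ω : Type*} {m0 : MeasurableSpace Ω}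
    {ℱ : Filtration ℕ m0} {Y Z : ℕ → Ω → ℝ} (hYa : Adapted ℱ Y) (hZa : Adapted ℱ Z)
    {τ σ : Ω → ℕ} (hτ : IsStoppingTime ℱ (fun ω => (τ ω : WithTop ℕ)))
    (hσ : IsStoppingTime ℱ (fun ω => (σ ω : WithTop ℕ))) :
    IsStoppingTime ℱ fun ω =>
      ((if σ ω < τ ω ∧ Y (σ ω) ω < Z (σ ω) ω then σ ω else τ ω : ℕ) : WithTop ℕ) := by
  have hprog {u : ℕ → Ω → ℝ} (hu : Adapted ℱ u) :=
    hu.stronglyAdapted.isStronglyProgressive_of_discrete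
  have hYZ : MeasurableSet[hσ.measurableSpace] {ω | Y (σ ω) ω < Z (σ ω) ω} :=
    measurableSet_lt (measurable_stoppedValue (hprog hYa) hσ)
      (measurable_stoppedValue (hprog hZa) hσ)
  have hE := hσ.measurableSet_inter_lt hτ hYZ
  have hpiece : (fun ω => ((if σ ω < τ ω ∧ Y (σ ω) ω < Z (σ ω) ω then σ ω else τ ω : ℕ) :
      WithTop ℕ)) = ({ω | Y (σ ω) ω < Z (σ ω) ω} ∩ {ω | (σ ω : WithTop ℕ) < τ ω}).piecewise
        (fun ω => min (σ ω : WithTop ℕ) (τ ω)) (fun ω => (τ ω : WithTop ℕ)) := by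
    funext ω
    by_cases h : σ ω < τ ω ∧ Y (σ ω) ω < Z (σ ω) ω
    · simp [h, h.1.le]
    · simp only [if_neg h, piecewise, mem_inter_iff, mem_ofPred_eq]
      rw [if_neg (fun hω => h ⟨WithTop.coe_lt_coe.1 hω.2, hω.1⟩)]
  rw [hpiece]
  exact (hσ.min hτ).piecewise_of_le_of_measurableSet hτ (fun ω => min_le_right _ _) hE

theorem payoffD_min_max_le_ite {Ω : Type*} (X Y Z : ℕ → Ω → ℝ) (τ σ : Ω → ℕ) (ω : Ω) :
    payoffD (fun u ω' => min (X u ω') (Z u ω')) (fun u ω' => max (Y u ω') (Z u ω')) Z τ σ ω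
      ≤ payoffD X Y Z (fun ω' => if σ ω' < τ ω' ∧ Y (σ ω') ω' < Z (σ ω') ω' then σ ω' else τ ω')
        σ ω := by
  by_cases h : σ ω < τ ω ∧ Y (σ ω) ω < Z (σ ω) ω
  · simp only [payoffD, if_pos h, lt_irrefl, if_false, if_neg h.1.not_gt, if_pos h.1]
    exact (max_eq_right h.2.le).le
  · simp only [payoffD, if_neg h]
    rcases lt_trichotomy (τ ω) (σ ω) with hlt | heq | hgt
    · simp only [if_pos hlt]
      exact min_le_left _ _
    · simp [heq]
    · simp only [if_neg hgt.not_gt, if_pos hgt]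
      exact (max_eq_left (not_lt.1 fun hYZ => h ⟨hgt, hYZ⟩)).le

theorem stmt7_general {Ω : Type*} {m0 : MeasurableSpace Ω} (μ : Measure Ω)
    (ℱ : Filtration ℕ m0)
    (X Y Z : ℕ → Ω → ℝ)
    (hYa : Adapted ℱ Y) (hZa : Adapted ℱ Z)
    (τ σ : Ω → ℕ)
    (hτ : IsStoppingTime ℱ (fun ω => (τ ω : WithTop ℕ))) (hσ : IsStoppingTime ℱ (fun ω => (σ ω : WithTop ℕ)))
    (τh : Ω → ℕ)
    (hτh : ∀ ω, τh ω =
      if σ ω < τ ω ∧ Y (σ ω) ω < Z (σ ω) ω then σ ω else τ ω) :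
    IsStoppingTime ℱ (fun ω => (τh ω : WithTop ℕ)) ∧
    ∀ᵐ ω ∂μ,
      payoffD (fun u ω' => min (X u ω') (Z u ω'))
          (fun u ω' => max (Y u ω') (Z u ω')) Z τ σ ω
        ≤ payoffD X Y Z τh σ ω := by
  obtain rfl : τh = _ := funext hτh
  exact ⟨isStoppingTime_ite_lt_and_lt hYa hZa hτ hσ,
    Eventually.of_forall (payoffD_min_max_le_ite X Y Z τ σ)⟩

/-- For the general Dynkin game with payoff `R` and the modified payoff `R̃` built from
`L = X ∧ Z` and `U = Y ∨ Z`: for any stopping times `τ, σ`, the modification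
`τ̂ = σ` on `{σ < τ, Z_σ > Y_σ}` and `τ̂ = τ` otherwise is a stopping time satisfying
`R(τ̂, σ) ≥ R̃(τ, σ)` pointwise. -/
theorem stmt7 {Ω : Type*} {m0 : MeasurableSpace Ω} (μ : Measure Ω) [IsProbabilityMeasure μ]
    (ℱ : Filtration ℕ m0) (T : ℕ)
    (X Y Z : ℕ → Ω → ℝ)
    (hXa : Adapted ℱ X) (hYa : Adapted ℱ Y) (hZa : Adapted ℱ Z)
    (hXi : ∀ s, Integrable (X s) μ) (hYi : ∀ s, Integrable (Y s) μ)
    (hZi : ∀ s, Integrable (Z s) μ)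
    (htermX : ∀ ω, X T ω = Z T ω) (htermY : ∀ ω, Y T ω = Z T ω)
    (τ σ : Ω → ℕ)
    (hτ : IsStoppingTime ℱ (fun ω => (τ ω : WithTop ℕ))) (hσ : IsStoppingTime ℱ (fun ω => (σ ω : WithTop ℕ)))
    (hτr : ∀ ω, τ ω ≤ T) (hσr : ∀ ω, σ ω ≤ T)
    (τh : Ω → ℕ)
    (hτh : ∀ ω, τh ω =
      if σ ω < τ ω ∧ Y (σ ω) ω < Z (σ ω) ω then σ ω else τ ω) :
    IsStoppingTime ℱ (fun ω => (τh ω : WithTop ℕ)) ∧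
    ∀ᵐ ω ∂μ,
      payoffD (fun u ω' => min (X u ω') (Z u ω'))
          (fun u ω' => max (Y u ω') (Z u ω')) Z τ σ ω
        ≤ payoffD X Y Z τh σ ω :=
  stmt7_general μ ℱ X Y Z hYa hZa τ σ hτ hσ τh hτh
end

section
/- Under the assumption X_t ∧ Y_t ≤ V_t ≤ X_t ∨ Y_t for all t (where V is the backward-induction process for the general discrete-time Dynkin game), the stopped value equals the actual payoff: V_{τ*_t ∧ σ*_t} = R(τ*_t, σ*_t) = X_{τ*_t} 1{τ*_t < σ*_t} + Y_{σ*_t} 1{σ*_t < τ*_t} + Z_{σ*_t} 1{σ*_t = τ*_t}, and hence V_t = E[R(τ*_t, σ*_t) | F_t]. -/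
open MeasureTheory Filter Set

section LinearOrder

variable {α : Type*} [LinearOrder α]

theorem eq_max_of_eq_min_of_ne {v x y z : α} (hv : v = min x z) (hle : min x y ≤ v)
    (hx : v ≠ x) : v = max y z := by
  grind

theorem eq_min_of_eq_max_of_ne {v x y z : α} (hv : v = max y z) (hle : v ≤ max x y)
    (hy : v ≠ y) : v = min x z := by
  grind

theorem eq_of_eq_min_max_of_ne {v a b c : α} (h : v = min a (max b c)) (ha : v ≠ a)
    (hb : v ≠ b) : v = c := by
  grind

end LinearOrder

section FirstHit

variable {Ω : Type*} {P : ℕ → Ω → Prop} {t T : ℕ} {τ : Ω → ℕ}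

theorem firstHit_spec (hτ : ∀ ω, τ ω = sInf {u | t ≤ u ∧ u ≤ T ∧ P u ω}) (ht : t ≤ T)
    (hT : ∀ ω, P T ω) (ω : Ω) : t ≤ τ ω ∧ τ ω ≤ T ∧ P (τ ω) ω :=
  hτ ω ▸ Nat.sInf_mem (s := {u | t ≤ u ∧ u ≤ T ∧ P u ω}) ⟨T, ht, le_rfl, hT ω⟩

theorem firstHit_le (hτ : ∀ ω, τ ω = sInf {u | t ≤ u ∧ u ≤ T ∧ P u ω}) {ω : Ω} {u : ℕ}
    (htu : t ≤ u) (huT : u ≤ T) (hu : P u ω) : τ ω ≤ u :=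
  hτ ω ▸ Nat.sInf_le ⟨htu, huT, hu⟩

theorem lt_firstHit_iff (hτ : ∀ ω, τ ω = sInf {u | t ≤ u ∧ u ≤ T ∧ P u ω}) (ht : t ≤ T)
    (hT : ∀ ω, P T ω) (ω : Ω) (s : ℕ) :
    s < τ ω ↔ ∀ u ∈ Finset.Icc t s, ¬ P u ω := by
  obtain ⟨htτ, hτT, hPτ⟩ := firstHit_spec hτ ht hT ω
  constructor
  · intro hs u hu hPu
    obtain ⟨htu, hus⟩ := Finset.mem_Icc.1 hu
    exact absurd (firstHit_le hτ htu (by omega) hPu) (by omega)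
  · intro h
    by_contra! hτs
    exact h (τ ω) (Finset.mem_Icc.2 ⟨htτ, hτs⟩) hPτ

theorem measurableSet_lt_firstHit {m0 : MeasurableSpace Ω} {ℱ : Filtration ℕ m0}
    (hτ : ∀ ω, τ ω = sInf {u | t ≤ u ∧ u ≤ T ∧ P u ω}) (ht : t ≤ T) (hT : ∀ ω, P T ω)
    {s : ℕ} (hP : ∀ u ≤ s, MeasurableSet[ℱ u] {ω | P u ω}) :
    MeasurableSet[ℱ s] {ω | s < τ ω} := by
  have hset : {ω | s < τ ω} = ⋂ u ∈ Finset.Icc t s, {ω | P u ω}ᶜ := by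
    ext ω
    simp [lt_firstHit_iff hτ ht hT]
  rw [hset]
  refine .biInter (Finset.Icc t s).countable_toSet fun u hu => ?_
  have hus : u ≤ s := (Finset.mem_Icc.1 hu).2
  exact (ℱ.mono hus _ (hP u hus)).compl

end FirstHit

section StoppedProcess

variable {Ω : Type*} {m0 : MeasurableSpace Ω} {μ : Measure Ω} {ℱ : Filtration ℕ m0}
  {W : ℕ → Ω → ℝ} {ρ : Ω → ℕ} {t T : ℕ}

/-- Mathlib's `stoppedProcess` takes `WithTop ℕ`-valued times; all times here are finite. -/
def natStoppedProcess (W : ℕ → Ω → ℝ) (ρ : Ω → ℕ) (s : ℕ) : Ω → ℝ :=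
  fun ω => W (min (ρ ω) s) ω

theorem natStoppedProcess_of_le {s : ℕ} (h : ∀ ω, s ≤ ρ ω) : natStoppedProcess W ρ s = W s :=
  funext fun ω => by rw [natStoppedProcess, min_eq_right (h ω)]

theorem natStoppedProcess_of_ge {s : ℕ} (h : ∀ ω, ρ ω ≤ s) :
    natStoppedProcess W ρ s = fun ω => W (ρ ω) ω :=
  funext fun ω => by rw [natStoppedProcess, min_eq_left (h ω)]

theorem natStoppedProcess_succ (W : ℕ → Ω → ℝ) (ρ : Ω → ℕ) (s : ℕ) :
    natStoppedProcess W ρ (s + 1) =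
      {ω | s < ρ ω}.indicator (W (s + 1)) + {ω | s < ρ ω}ᶜ.indicator (natStoppedProcess W ρ s) := by
  ext ω
  by_cases h : s < ρ ω
  · simp [natStoppedProcess, h]
  · simp [natStoppedProcess, h, min_eq_left (Nat.le_succ_of_le (not_lt.1 h)),
      min_eq_left (not_lt.1 h)]

theorem natStoppedProcess_stronglyMeasurable_integrable (hρ : ∀ ω, t ≤ ρ ω)
    (hA : ∀ s, t ≤ s → s < T → MeasurableSet[ℱ s] {ω | s < ρ ω})
    (hW : ∀ s, t ≤ s → s ≤ T → StronglyMeasurable[ℱ s] (W s) ∧ Integrable (W s) μ)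
    (s : ℕ) (hts : t ≤ s) (hsT : s ≤ T) :
    StronglyMeasurable[ℱ s] (natStoppedProcess W ρ s) ∧
      Integrable (natStoppedProcess W ρ s) μ := by
  induction s, hts using Nat.le_induction with
  | base => rw [natStoppedProcess_of_le hρ]; exact hW t le_rfl hsT
  | succ s hts ih =>
    obtain ⟨hSm, hSi⟩ := ih (by omega)
    obtain ⟨hWm, hWi⟩ := hW (s + 1) (by omega) hsT
    have hAs : MeasurableSet[ℱ (s + 1)] {ω | s < ρ ω} := ℱ.mono s.le_succ _ (hA s hts (by omega))
    rw [natStoppedProcess_succ]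
    exact ⟨(hWm.indicator hAs).add ((hSm.mono (ℱ.mono s.le_succ)).indicator hAs.compl),
      (hWi.indicator (ℱ.le _ _ hAs)).add (hSi.indicator (ℱ.le _ _ hAs).compl)⟩

variable [IsFiniteMeasure μ]

theorem condExp_natStoppedProcess_succ {s : ℕ} (hA : MeasurableSet[ℱ s] {ω | s < ρ ω})
    (hSm : StronglyMeasurable[ℱ s] (natStoppedProcess W ρ s))
    (hSi : Integrable (natStoppedProcess W ρ s) μ) (hWi : Integrable (W (s + 1)) μ)
    (hW : ∀ ω, s < ρ ω → μ[W (s + 1) | ℱ s] ω = W s ω) :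
    μ[natStoppedProcess W ρ (s + 1) | ℱ s] =ᵐ[μ] natStoppedProcess W ρ s := by
  have hAm := ℱ.le s _ hA
  rw [natStoppedProcess_succ]
  filter_upwards [condExp_add (hWi.indicator hAm) (hSi.indicator hAm.compl) (ℱ s),
    condExp_indicator hWi hA] with ω hadd hind
  rw [hadd, Pi.add_apply, hind, condExp_of_stronglyMeasurable (ℱ.le s) (hSm.indicator hA.compl)
    (hSi.indicator hAm.compl)]
  by_cases h : s < ρ ω
  · simp [h, hW ω h, natStoppedProcess, min_eq_right h.le]
  · simp [h]

theorem condExp_ae_eq_of_condExp_succ_ae_eq {M : ℕ → Ω → ℝ} (htT : t ≤ T)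
    (hMm : StronglyMeasurable[ℱ t] (M t)) (hMi : Integrable (M t) μ)
    (hsucc : ∀ s, t ≤ s → s < T → μ[M (s + 1) | ℱ s] =ᵐ[μ] M s) :
    μ[M T | ℱ t] =ᵐ[μ] M t := by
  induction T, htT using Nat.le_induction with
  | base => rw [condExp_of_stronglyMeasurable (ℱ.le t) hMm hMi]
  | succ u htu ih =>
    calc μ[M (u + 1) | ℱ t]
        =ᵐ[μ] μ[μ[M (u + 1) | ℱ u] | ℱ t] := (condExp_condExp_of_le (ℱ.mono htu) (ℱ.le u)).symm
      _ =ᵐ[μ] μ[M u | ℱ t] := condExp_congr_ae (hsucc u htu (by omega))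
      _ =ᵐ[μ] M t := ih fun s hts hsu => hsucc s hts (by omega)

theorem condExp_stoppedValue_ae_eq (htT : t ≤ T) (hρt : ∀ ω, t ≤ ρ ω) (hρT : ∀ ω, ρ ω ≤ T)
    (hA : ∀ s, t ≤ s → s < T → MeasurableSet[ℱ s] {ω | s < ρ ω})
    (hW : ∀ s, t ≤ s → s ≤ T → StronglyMeasurable[ℱ s] (W s) ∧ Integrable (W s) μ)
    (hmart : ∀ s, t ≤ s → ∀ ω, s < ρ ω → μ[W (s + 1) | ℱ s] ω = W s ω) :
    μ[fun ω => W (ρ ω) ω | ℱ t] =ᵐ[μ] W t := by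
  have hS := natStoppedProcess_stronglyMeasurable_integrable hρt hA hW
  have h := condExp_ae_eq_of_condExp_succ_ae_eq htT (hS t le_rfl htT).1 (hS t le_rfl htT).2
    fun s hts hsT => condExp_natStoppedProcess_succ (hA s hts hsT) (hS s hts hsT.le).1
      (hS s hts hsT.le).2 (hW (s + 1) (by omega) hsT).2 (hmart s hts)
  rwa [natStoppedProcess_of_ge hρT, natStoppedProcess_of_le hρt] at h

end StoppedProcess

section Dynkin

variable {Ω : Type*} {m0 : MeasurableSpace Ω} {μ : Measure Ω} {ℱ : Filtration ℕ m0}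
  {X Y Z V : ℕ → Ω → ℝ} {T : ℕ}

theorem dynkinValue_stronglyMeasurable_integrable (hXa : Adapted ℱ X) (hYa : Adapted ℱ Y)
    (hZa : Adapted ℱ Z) (hXi : ∀ s, Integrable (X s) μ) (hYi : ∀ s, Integrable (Y s) μ)
    (hZi : ∀ s, Integrable (Z s) μ) (hVT : ∀ ω, V T ω = Z T ω)
    (hV : ∀ s, s < T → ∀ ω, V s ω =
      min (max (Y s ω) (Z s ω)) (max (min (X s ω) (Z s ω)) ((μ[V (s + 1) | ℱ s]) ω)))
    (s : ℕ) (hs : s ≤ T) :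
    StronglyMeasurable[ℱ s] (V s) ∧ Integrable (V s) μ := by
  rcases hs.lt_or_eq with hs | rfl
  · rw [funext (hV s hs)]
    exact ⟨(((hYa s).max (hZa s)).min
        (((hXa s).min (hZa s)).max stronglyMeasurable_condExp.measurable)).stronglyMeasurable,
      ((hYi s).sup (hZi s)).inf (((hXi s).inf (hZi s)).sup integrable_condExp)⟩
  · rw [funext hVT]
    exact ⟨(hZa s).stronglyMeasurable, hZi s⟩

/-- A tie `τ = σ` is harmless because `V_τ = L_τ ≤ Z_τ ≤ U_τ = V_τ`; if `τ < σ`, the sandwich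
forces `V_τ = X_τ`, since `V_τ = Z_τ < X_τ` would give `Y_τ ≤ Z_τ`, i.e. `V_τ = U_τ`. -/
theorem dynkinValue_stopped_eq_payoffD {t : ℕ} (ht : t ≤ T) {τ σ : Ω → ℕ}
    (hL : ∀ ω, V T ω = min (X T ω) (Z T ω)) (hU : ∀ ω, V T ω = max (Y T ω) (Z T ω))
    (hτ : ∀ ω, τ ω = sInf {u | t ≤ u ∧ u ≤ T ∧ V u ω = min (X u ω) (Z u ω)})
    (hσ : ∀ ω, σ ω = sInf {u | t ≤ u ∧ u ≤ T ∧ V u ω = max (Y u ω) (Z u ω)}) {ω : Ω}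
    (hsand : ∀ s ≤ T, min (X s ω) (Y s ω) ≤ V s ω ∧ V s ω ≤ max (X s ω) (Y s ω)) :
    V (min (τ ω) (σ ω)) ω = payoffD X Y Z τ σ ω := by
  obtain ⟨htτ, hτT, hVτ⟩ := firstHit_spec hτ ht hL ω
  obtain ⟨htσ, hσT, hVσ⟩ := firstHit_spec hσ ht hU ω
  rcases lt_trichotomy (τ ω) (σ ω) with h | h | h
  · rw [min_eq_left h.le, payoffD, if_pos h]
    by_contra hne
    have := firstHit_le hσ htτ hτT (eq_max_of_eq_min_of_ne hVτ (hsand _ hτT).1 hne)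
    omega
  · rw [payoffD, if_neg h.not_lt, if_neg h.symm.not_lt, ← h, min_self]
    rw [h] at hVτ ⊢
    exact le_antisymm (hVτ ▸ min_le_right _ _) (hVσ ▸ le_max_right _ _)
  · rw [min_eq_right h.le, payoffD, if_neg (lt_asymm h), if_pos h]
    by_contra hne
    have := firstHit_le hτ htσ hσT (eq_min_of_eq_max_of_ne hVσ (hsand _ hσT).2 hne)
    omega

theorem dynkinValue_condExp_succ_of_lt_stop {t : ℕ} (ht : t ≤ T) {τ σ : Ω → ℕ}
    (hL : ∀ ω, V T ω = min (X T ω) (Z T ω))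
    (hτ : ∀ ω, τ ω = sInf {u | t ≤ u ∧ u ≤ T ∧ V u ω = min (X u ω) (Z u ω)})
    (hσ : ∀ ω, σ ω = sInf {u | t ≤ u ∧ u ≤ T ∧ V u ω = max (Y u ω) (Z u ω)})
    (hV : ∀ s, s < T → ∀ ω, V s ω =
      min (max (Y s ω) (Z s ω)) (max (min (X s ω) (Z s ω)) ((μ[V (s + 1) | ℱ s]) ω)))
    {s : ℕ} (hts : t ≤ s) {ω : Ω} (hs : s < min (τ ω) (σ ω)) :
    μ[V (s + 1) | ℱ s] ω = V s ω := by
  have hτT := (firstHit_spec hτ ht hL ω).2.1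
  rw [lt_min_iff] at hs
  refine (eq_of_eq_min_max_of_ne (hV s (by omega) ω) (fun h => ?_) fun h => ?_).symm
  · have := firstHit_le hσ hts (by omega) h; omega
  · have := firstHit_le hτ hts (by omega) h; omega

theorem measurableSet_lt_min_dynkinStop {t : ℕ} (ht : t ≤ T) {τ σ : Ω → ℕ}
    (hXa : Adapted ℱ X) (hYa : Adapted ℱ Y) (hZa : Adapted ℱ Z)
    (hVm : ∀ s ≤ T, StronglyMeasurable[ℱ s] (V s))
    (hL : ∀ ω, V T ω = min (X T ω) (Z T ω)) (hU : ∀ ω, V T ω = max (Y T ω) (Z T ω))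
    (hτ : ∀ ω, τ ω = sInf {u | t ≤ u ∧ u ≤ T ∧ V u ω = min (X u ω) (Z u ω)})
    (hσ : ∀ ω, σ ω = sInf {u | t ≤ u ∧ u ≤ T ∧ V u ω = max (Y u ω) (Z u ω)})
    {s : ℕ} (hsT : s ≤ T) :
    MeasurableSet[ℱ s] {ω | s < min (τ ω) (σ ω)} := by
  simp only [lt_min_iff, Set.ofPred_and]
  exact (measurableSet_lt_firstHit hτ ht hL fun u hu =>
      measurableSet_eq_fun (hVm u (by omega)).measurable ((hXa u).min (hZa u))).inter
    (measurableSet_lt_firstHit hσ ht hU fun u hu =>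
      measurableSet_eq_fun (hVm u (by omega)).measurable ((hYa u).max (hZa u)))

end Dynkin

/-- Under the sandwich assumption `X_t ∧ Y_t ≤ V_t ≤ X_t ∨ Y_t` for all `t`, the
backward-induction process `V` of the general discrete-time Dynkin game stopped at
`τ*_t ∧ σ*_t` equals the actual payoff:
`V_{τ*_t ∧ σ*_t} = R(τ*_t, σ*_t)`, and hence `V_t = E[R(τ*_t, σ*_t) | ℱ t]`. -/
theorem stmt10 {Ω : Type*} {m0 : MeasurableSpace Ω} (μ : Measure Ω) [IsProbabilityMeasure μ]
    (ℱ : Filtration ℕ m0) (T : ℕ)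
    (X Y Z V : ℕ → Ω → ℝ)
    (hXa : Adapted ℱ X) (hYa : Adapted ℱ Y) (hZa : Adapted ℱ Z)
    (hXi : ∀ s, Integrable (X s) μ) (hYi : ∀ s, Integrable (Y s) μ)
    (hZi : ∀ s, Integrable (Z s) μ)
    (htermX : ∀ ω, X T ω = Z T ω) (htermY : ∀ ω, Y T ω = Z T ω)
    (hVT : ∀ ω, V T ω = Z T ω)
    (hV : ∀ s, s < T → ∀ ω, V s ω =
      min (max (Y s ω) (Z s ω))
        (max (min (X s ω) (Z s ω)) ((μ[V (s + 1) | ℱ s]) ω)))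
    (hsand : ∀ s, s ≤ T → ∀ᵐ ω ∂μ,
      min (X s ω) (Y s ω) ≤ V s ω ∧ V s ω ≤ max (X s ω) (Y s ω))
    (t : ℕ) (ht : t ≤ T)
    (τs σs : Ω → ℕ)
    (hτs : ∀ ω, τs ω = sInf {u | t ≤ u ∧ u ≤ T ∧ V u ω = min (X u ω) (Z u ω)})
    (hσs : ∀ ω, σs ω = sInf {u | t ≤ u ∧ u ≤ T ∧ V u ω = max (Y u ω) (Z u ω)}) :
    (∀ᵐ ω ∂μ, V (min (τs ω) (σs ω)) ω = payoffD X Y Z τs σs ω) ∧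
    V t =ᵐ[μ] μ[payoffD X Y Z τs σs | ℱ t] := by
  have hL : ∀ ω, V T ω = min (X T ω) (Z T ω) := fun ω => by rw [hVT, htermX, min_self]
  have hU : ∀ ω, V T ω = max (Y T ω) (Z T ω) := fun ω => by rw [hVT, htermY, max_self]
  have hVreg := dynkinValue_stronglyMeasurable_integrable hXa hYa hZa hXi hYi hZi hVT hV
  have hpay : ∀ᵐ ω ∂μ, V (min (τs ω) (σs ω)) ω = payoffD X Y Z τs σs ω := by
    filter_upwards [(Set.finite_Iic T).eventually_all.2 hsand] with ω hω
    exact dynkinValue_stopped_eq_payoffD ht hL hU hτs hσs hω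
  have hτ := firstHit_spec hτs ht hL
  have hσ := firstHit_spec hσs ht hU
  have hstop := condExp_stoppedValue_ae_eq ht (fun ω => le_min (hτ ω).1 (hσ ω).1)
    (fun ω => (min_le_left _ _).trans (hτ ω).2.1)
    (fun s _ hsT => measurableSet_lt_min_dynkinStop ht hXa hYa hZa (fun u hu => (hVreg u hu).1)
      hL hU hτs hσs hsT.le)
    (fun s _ hsT => hVreg s hsT)
    (fun s hts ω hs => dynkinValue_condExp_succ_of_lt_stop ht hL hτs hσs hV hts hs)
  exact ⟨hpay, hstop.symm.trans (condExp_congr_ae hpay)⟩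
end

section
/- Suppose the backward-induction process V of the general discrete-time Dynkin game violates the sandwich condition at some time t < T, i.e. P({V_t < X_t ∧ Y_t} ∪ {V_t > X_t ∨ Y_t}) > 0. Then the Dynkin game GDG_t(X,Y,Z) started at time t does not admit a Nash equilibrium. -/
/-!
Let `(τ*, σ*)` be an equilibrium of `GDG_t` with value `W = E[R(τ*, σ*) | ℱ_t]`.
Against `σ*`, the maximiser may stop at the first time at which stopping is at least as good as
continuing with the backward-induction process `V`; by backward induction this reply earns at
least `V_t`, so `V_t ≤ W`. The minimiser may deviate to `σ = t`, which pays `Y_t` where `τ* > t`,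
or to `σ = T`, which pays `X_t` where `τ* = t`; hence `W ≤ X_t ∨ Y_t`.
In the mirrored game with rewards `(-Y, -X, -Z)` the pair `(σ*, τ*)` is again an equilibrium and
`-V` is the backward-induction process, so the same two bounds give `X_t ∧ Y_t ≤ V_t`.
-/

open MeasureTheory Filter Set

namespace DynkinGame

section CondExp

variable {α : Type*} {m m0 : MeasurableSpace α} {μ : Measure α} {s : Set α} {f g : α → ℝ}

theorem ae_condExp_eq_of_ae_eq_on (hm : m ≤ m0) [SigmaFinite (μ.trim hm)]
    (hs : MeasurableSet[m] s) (hf : Integrable f μ) (hg : StronglyMeasurable[m] g)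
    (hfg : ∀ᵐ x ∂μ, x ∈ s → f x = g x) :
    ∀ᵐ x ∂μ, x ∈ s → μ[f|m] x = g x := by
  have hind : s.indicator f =ᵐ[μ] s.indicator g := by
    filter_upwards [hfg] with x hx
    by_cases h : x ∈ s <;> simp [h, hx]
  have hg_condExp : μ[s.indicator g|m] = s.indicator g :=
    condExp_of_stronglyMeasurable hm (hg.indicator hs) ((hf.indicator (hm s hs)).congr hind)
  filter_upwards [condExp_indicator hf hs, condExp_congr_ae hind] with x hf_ind hcongr hx
  rw [← indicator_of_mem hx (μ[f|m]), ← hf_ind, hcongr, hg_condExp, indicator_of_mem hx]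

theorem ae_condExp_le_of_ae_le_on (hm : m ≤ m0) (hs : MeasurableSet[m] s)
    (hf : Integrable f μ) (hg : Integrable g μ) (hfg : ∀ᵐ x ∂μ, x ∈ s → f x ≤ g x) :
    ∀ᵐ x ∂μ, x ∈ s → μ[f|m] x ≤ μ[g|m] x := by
  have hind : s.indicator f ≤ᵐ[μ] s.indicator g := by
    filter_upwards [hfg] with x hx
    by_cases h : x ∈ s <;> simp [h, hx]
  filter_upwards [condExp_mono (m := m) (hf.indicator (hm s hs)) (hg.indicator (hm s hs)) hind,
    condExp_indicator hf hs, condExp_indicator hg hs] with x hle hf_ind hg_ind hx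
  simpa [hf_ind, hg_ind, indicator_of_mem hx] using hle

end CondExp

section StoppingTime

variable {Ω : Type*} {m0 : MeasurableSpace Ω} {ℱ : Filtration ℕ m0} {τ : Ω → ℕ}

theorem measurableSet_eq_of_isStoppingTime (hτ : IsStoppingTime ℱ (fun ω => (τ ω : WithTop ℕ)))
    (i : ℕ) : MeasurableSet[ℱ i] {ω | τ ω = i} := by
  simpa using hτ.measurableSet_eq i

theorem measurableSet_lt_of_isStoppingTime (hτ : IsStoppingTime ℱ (fun ω => (τ ω : WithTop ℕ)))
    (i : ℕ) : MeasurableSet[ℱ i] {ω | i < τ ω} := by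
  simpa using hτ.measurableSet_gt i

theorem measurable_of_isStoppingTime (hτ : IsStoppingTime ℱ (fun ω => (τ ω : WithTop ℕ))) :
    Measurable τ :=
  measurable_to_countable' fun i => ℱ.le i _ (measurableSet_eq_of_isStoppingTime hτ i)

end StoppingTime

section Payoff

variable {Ω : Type*} {m0 : MeasurableSpace Ω} {μ : Measure Ω} {ℱ : Filtration ℕ m0}
  {X Y Z : ℕ → Ω → ℝ} {τ σ : Ω → ℕ}

theorem payoffD_neg_swap : payoffD (-Y) (-X) (-Z) σ τ = -payoffD X Y Z τ σ := by
  funext ω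
  rcases lt_trichotomy (τ ω) (σ ω) with h | h | h
  · simp [payoffD, h, h.not_gt]
  · simp [payoffD, h]
  · simp [payoffD, h, h.not_gt]

theorem integrable_payoffD (hτ : IsStoppingTime ℱ (fun ω => (τ ω : WithTop ℕ)))
    (hσ : IsStoppingTime ℱ (fun ω => (σ ω : WithTop ℕ))) {T : ℕ} (hτT : ∀ ω, τ ω ≤ T)
    (hσT : ∀ ω, σ ω ≤ T) (hXi : ∀ s, Integrable (X s) μ) (hYi : ∀ s, Integrable (Y s) μ)
    (hZi : ∀ s, Integrable (Z s) μ) : Integrable (payoffD X Y Z τ σ) μ := by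
  have hτm := measurable_of_isStoppingTime hτ
  have hσm := measurable_of_isStoppingTime hσ
  have hXτ : Integrable (fun ω => X (τ ω) ω) μ :=
    integrable_stoppedValue ℕ hτ hXi (N := T) (by simpa using hτT)
  have hYσ : Integrable (fun ω => Y (σ ω) ω) μ :=
    integrable_stoppedValue ℕ hσ hYi (N := T) (by simpa using hσT)
  have hZσ : Integrable (fun ω => Z (σ ω) ω) μ :=
    integrable_stoppedValue ℕ hσ hZi (N := T) (by simpa using hσT)
  have hsplit : payoffD X Y Z τ σ = {ω | τ ω < σ ω}.indicator (fun ω => X (τ ω) ω)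
      + {ω | σ ω < τ ω}.indicator (fun ω => Y (σ ω) ω)
      + {ω | τ ω = σ ω}.indicator (fun ω => Z (σ ω) ω) := by
    funext ω
    rcases lt_trichotomy (τ ω) (σ ω) with h | h | h
    · simp [payoffD, h, h.not_gt, h.ne]
    · simp [payoffD, h]
    · simp [payoffD, h, h.not_gt, h.ne']
  rw [hsplit]
  exact ((hXτ.indicator (measurableSet_lt hτm hσm)).add
    (hYσ.indicator (measurableSet_lt hσm hτm))).add (hZσ.indicator (measurableSet_eq_fun hτm hσm))

theorem ae_condExp_payoffD_eq_of_min_eq [IsFiniteMeasure μ]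
    (hτ : IsStoppingTime ℱ (fun ω => (τ ω : WithTop ℕ)))
    (hσ : IsStoppingTime ℱ (fun ω => (σ ω : WithTop ℕ)))
    (hXa : Adapted ℱ X) (hYa : Adapted ℱ Y) (hZa : Adapted ℱ Z)
    (hR : Integrable (payoffD X Y Z τ σ) μ) (s : ℕ) :
    ∀ᵐ ω ∂μ, min (τ ω) (σ ω) = s → μ[payoffD X Y Z τ σ|ℱ s] ω = payoffD X Y Z τ σ ω := by
  have hmin : IsStoppingTime ℱ (fun ω => (min (τ ω) (σ ω) : WithTop ℕ)) := by
    simpa [WithTop.coe_min] using hτ.min hσ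
  let g : Ω → ℝ := fun ω => if τ ω = s then (if σ ω = s then Z s ω else X s ω) else Y s ω
  have hg : StronglyMeasurable[ℱ s] g :=
    (Measurable.ite (measurableSet_eq_of_isStoppingTime hτ s)
      (Measurable.ite (measurableSet_eq_of_isStoppingTime hσ s) (hZa s) (hXa s))
      (hYa s)).stronglyMeasurable
  have hRg : ∀ ω, min (τ ω) (σ ω) = s → payoffD X Y Z τ σ ω = g ω := by
    intro ω hω
    simp only [payoffD, g]
    generalize τ ω = a, σ ω = b at *
    subst hω
    rcases lt_trichotomy a b with h | rfl | h
    · simp [h, h.le, h.ne']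
    · simp
    · simp [h, h.le, h.ne', h.not_gt]
  filter_upwards [ae_condExp_eq_of_ae_eq_on (ℱ.le s) (measurableSet_eq_of_isStoppingTime hmin s)
    hR hg (Eventually.of_forall hRg)] with ω hω hs
  rw [hω hs, hRg ω hs]

theorem ae_le_condExp_payoffD_of_step [IsFiniteMeasure μ] {V : ℕ → Ω → ℝ} {t T : ℕ}
    (hτ : IsStoppingTime ℱ (fun ω => (τ ω : WithTop ℕ)))
    (hσ : IsStoppingTime ℱ (fun ω => (σ ω : WithTop ℕ)))
    (hτT : ∀ ω, τ ω ≤ T) (hσT : ∀ ω, σ ω ≤ T)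
    (hXa : Adapted ℱ X) (hYa : Adapted ℱ Y) (hZa : Adapted ℱ Z)
    (hR : Integrable (payoffD X Y Z τ σ) μ) (hVi : ∀ s ≤ T, Integrable (V s) μ)
    (hVT : ∀ᵐ ω ∂μ, V T ω ≤ Z T ω)
    (hstep : ∀ s, t ≤ s → s < T → ∀ᵐ ω ∂μ, s ≤ τ ω → s ≤ σ ω →
      V s ω ≤ if s < τ ω ∧ s < σ ω then μ[V (s + 1)|ℱ s] ω else payoffD X Y Z τ σ ω)
    (htT : t ≤ T) :
    ∀ᵐ ω ∂μ, t ≤ τ ω → t ≤ σ ω → V t ω ≤ μ[payoffD X Y Z τ σ|ℱ t] ω := by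
  have hstop := ae_condExp_payoffD_eq_of_min_eq hτ hσ hXa hYa hZa hR
  refine Nat.decreasingInduction'
    (P := fun k => ∀ᵐ ω ∂μ, k ≤ τ ω → k ≤ σ ω → V k ω ≤ μ[payoffD X Y Z τ σ|ℱ k] ω)
    (fun s hsT hts ih => ?_) htT ?_
  · have hcont : ∀ᵐ ω ∂μ, ω ∈ {ω | s < τ ω} ∩ {ω | s < σ ω} →
        μ[V (s + 1)|ℱ s] ω ≤ μ[μ[payoffD X Y Z τ σ|ℱ (s + 1)]|ℱ s] ω := by
      refine ae_condExp_le_of_ae_le_on (ℱ.le s)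
        ((measurableSet_lt_of_isStoppingTime hτ s).inter (measurableSet_lt_of_isStoppingTime hσ s))
        (hVi (s + 1) hsT) integrable_condExp ?_
      filter_upwards [ih] with ω hω hs
      exact hω hs.1 hs.2
    filter_upwards [hstep s hts hsT, hcont, hstop s,
      condExp_condExp_of_le (μ := μ) (f := payoffD X Y Z τ σ) (ℱ.mono s.le_succ) (ℱ.le (s + 1))]
      with ω hV hc hE htower hτω hσω
    specialize hV hτω hσω
    split_ifs at hV with hcase
    · exact hV.trans (htower ▸ hc hcase)
    · rw [hE (by omega)]
      exact hV
  · filter_upwards [hVT, hstop T] with ω hV hE hτω hσω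
    have hτ_eq : τ ω = T := le_antisymm (hτT ω) hτω
    have hσ_eq : σ ω = T := le_antisymm (hσT ω) hσω
    rw [hE (by omega)]
    simpa [payoffD, hτ_eq, hσ_eq] using hV

end Payoff

section Game

variable {Ω : Type*} {m0 : MeasurableSpace Ω} {μ : Measure Ω} {ℱ : Filtration ℕ m0}
  {X Y Z V : ℕ → Ω → ℝ} {t T : ℕ}

structure IsAdaptedIntegrable (μ : Measure Ω) (ℱ : Filtration ℕ m0) (X : ℕ → Ω → ℝ) : Prop where
  adapted : Adapted ℱ X
  integrable : ∀ s, Integrable (X s) μ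

theorem IsAdaptedIntegrable.neg (hX : IsAdaptedIntegrable μ ℱ X) : IsAdaptedIntegrable μ ℱ (-X) :=
  ⟨fun s => (hX.adapted s).neg, fun s => (hX.integrable s).neg⟩

/-- Stated almost surely so that `-V` solves the mirrored recursion, see `IsDynkinValue.neg`. -/
structure IsDynkinValue (μ : Measure Ω) (ℱ : Filtration ℕ m0) (T : ℕ) (X Y Z V : ℕ → Ω → ℝ) :
    Prop where
  terminal : V T =ᵐ[μ] Z T
  step : ∀ s < T, V s =ᵐ[μ] fun ω =>
    min (max (Y s ω) (Z s ω)) (max (min (X s ω) (Z s ω)) (μ[V (s + 1)|ℱ s] ω))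

theorem IsDynkinValue.integrable (hV : IsDynkinValue μ ℱ T X Y Z V)
    (hX : IsAdaptedIntegrable μ ℱ X) (hY : IsAdaptedIntegrable μ ℱ Y)
    (hZ : IsAdaptedIntegrable μ ℱ Z) {s : ℕ} (hs : s ≤ T) : Integrable (V s) μ := by
  refine Nat.decreasingInduction (motive := fun k _ => Integrable (V k) μ)
    (fun k hk _ => ?_) ((hZ.integrable T).congr hV.terminal.symm) hs
  exact (((hY.integrable k).sup (hZ.integrable k)).inf
    (((hX.integrable k).inf (hZ.integrable k)).sup integrable_condExp)).congr (hV.step k hk).symm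

theorem IsDynkinValue.neg (hV : IsDynkinValue μ ℱ T X Y Z V) :
    IsDynkinValue μ ℱ T (-Y) (-X) (-Z) (-V) where
  terminal := hV.terminal.neg
  step s hs := by
    filter_upwards [hV.step s hs, condExp_neg (V (s + 1)) (ℱ s)] with ω hVs hneg
    simp only [Pi.neg_apply, hVs, hneg]
    grind

/-- What the maximiser gains at time `s` by continuing rather than stopping, against `σ` and with
continuation value `V`. -/
noncomputable def continuationGain (μ : Measure Ω) (ℱ : Filtration ℕ m0) (X Y Z V : ℕ → Ω → ℝ)
    (σ : Ω → ℕ) (s : ℕ) (ω : Ω) : ℝ :=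
  if σ ω = s then Y s ω - Z s ω else μ[V (s + 1)|ℱ s] ω - X s ω

noncomputable def bestResponse (μ : Measure Ω) (ℱ : Filtration ℕ m0) (X Y Z V : ℕ → Ω → ℝ)
    (σ : Ω → ℕ) (t T : ℕ) : Ω → ℕ :=
  hittingBtwn (continuationGain μ ℱ X Y Z V σ) (Iic 0) t T

variable {σ : Ω → ℕ}

theorem isStoppingTime_bestResponse (hσ : IsStoppingTime ℱ (fun ω => (σ ω : WithTop ℕ)))
    (hX : Adapted ℱ X) (hY : Adapted ℱ Y) (hZ : Adapted ℱ Z) :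
    IsStoppingTime ℱ (fun ω => (bestResponse μ ℱ X Y Z V σ t T ω : WithTop ℕ)) :=
  Adapted.isStoppingTime_hittingBtwn
    (fun s => Measurable.ite (measurableSet_eq_of_isStoppingTime hσ s)
      ((hY s).sub (hZ s)) (stronglyMeasurable_condExp.measurable.sub (hX s)))
    measurableSet_Iic

theorem continuationGain_nonpos_of_bestResponse_eq {s : ℕ} {ω : Ω}
    (hs : bestResponse μ ℱ X Y Z V σ t T ω = s) (hsT : s < T) :
    continuationGain μ ℱ X Y Z V σ s ω ≤ 0 := by
  subst hs
  exact hittingBtwn_mem_set_of_hittingBtwn_lt hsT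

theorem continuationGain_pos_of_lt_bestResponse {s : ℕ} {ω : Ω} (hts : t ≤ s)
    (hs : s < bestResponse μ ℱ X Y Z V σ t T ω) : 0 < continuationGain μ ℱ X Y Z V σ s ω := by
  simpa using notMem_of_lt_hittingBtwn hs hts

theorem IsDynkinValue.ae_le_bestResponse_step (hV : IsDynkinValue μ ℱ T X Y Z V) {s : ℕ}
    (hts : t ≤ s) (hsT : s < T) :
    ∀ᵐ ω ∂μ, s ≤ bestResponse μ ℱ X Y Z V σ t T ω → s ≤ σ ω →
      V s ω ≤ if s < bestResponse μ ℱ X Y Z V σ t T ω ∧ s < σ ω then μ[V (s + 1)|ℱ s] ω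
        else payoffD X Y Z (bestResponse μ ℱ X Y Z V σ t T) σ ω := by
  filter_upwards [hV.step s hsT] with ω hVs hτω hσω
  rw [hVs]
  rcases hτω.eq_or_lt with hτs | hτs <;> rcases hσω.eq_or_lt with hσs | hσs
  · have hYZ : Y s ω ≤ Z s ω := by
      simpa [continuationGain, ← hσs] using
        continuationGain_nonpos_of_bestResponse_eq hτs.symm hsT
    simp only [payoffD, ← hτs, ← hσs, lt_irrefl, false_and, if_false]
    exact min_le_of_left_le (max_le hYZ le_rfl)
  · have hEX : μ[V (s + 1)|ℱ s] ω ≤ X s ω := by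
      simpa [continuationGain, hσs.ne', sub_nonpos] using
        continuationGain_nonpos_of_bestResponse_eq hτs.symm hsT
    simp only [payoffD, ← hτs, hσs, lt_irrefl, false_and, if_false, if_true]
    exact min_le_of_right_le (max_le (min_le_left _ _) hEX)
  · have hZY : Z s ω < Y s ω := by
      simpa [continuationGain, ← hσs] using continuationGain_pos_of_lt_bestResponse hts hτs
    simp only [payoffD, ← hσs, hτs, lt_irrefl, and_false, if_false, if_true, not_lt_of_gt hτs]
    exact min_le_of_left_le (max_le le_rfl hZY.le)
  · have hXE : X s ω < μ[V (s + 1)|ℱ s] ω := by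
      simpa [continuationGain, hσs.ne'] using continuationGain_pos_of_lt_bestResponse hts hτs
    rw [if_pos ⟨hτs, hσs⟩]
    exact min_le_of_right_le (max_le ((min_le_left _ _).trans hXE.le) le_rfl)

def IsStrategy (ℱ : Filtration ℕ m0) (t T : ℕ) (τ : Ω → ℕ) : Prop :=
  IsStoppingTime ℱ (fun ω => (τ ω : WithTop ℕ)) ∧ ∀ ω, τ ω ∈ Icc t T

theorem isStrategy_const (ℱ : Filtration ℕ m0) {s : ℕ} (hs : s ∈ Icc t T) :
    IsStrategy ℱ t T (fun _ : Ω => s) :=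
  ⟨isStoppingTime_const ℱ s, fun _ => hs⟩

theorem isStrategy_bestResponse (hσ : IsStrategy ℱ t T σ) (hX : Adapted ℱ X) (hY : Adapted ℱ Y)
    (hZ : Adapted ℱ Z) (htT : t ≤ T) : IsStrategy ℱ t T (bestResponse μ ℱ X Y Z V σ t T) :=
  ⟨isStoppingTime_bestResponse hσ.1 hX hY hZ, fun ω => hittingBtwn_mem_Icc htT ω⟩

theorem IsStrategy.integrable_payoffD {τ : Ω → ℕ} (hτ : IsStrategy ℱ t T τ)
    (hσ : IsStrategy ℱ t T σ) (hX : IsAdaptedIntegrable μ ℱ X) (hY : IsAdaptedIntegrable μ ℱ Y)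
    (hZ : IsAdaptedIntegrable μ ℱ Z) : Integrable (payoffD X Y Z τ σ) μ :=
  DynkinGame.integrable_payoffD hτ.1 hσ.1 (fun ω => (hτ.2 ω).2) (fun ω => (hσ.2 ω).2)
    hX.integrable hY.integrable hZ.integrable

theorem IsDynkinValue.ae_le_condExp_payoffD_bestResponse [IsFiniteMeasure μ]
    (hV : IsDynkinValue μ ℱ T X Y Z V) (hX : IsAdaptedIntegrable μ ℱ X)
    (hY : IsAdaptedIntegrable μ ℱ Y) (hZ : IsAdaptedIntegrable μ ℱ Z) (hσ : IsStrategy ℱ t T σ)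
    (htT : t ≤ T) : V t ≤ᵐ[μ] μ[payoffD X Y Z (bestResponse μ ℱ X Y Z V σ t T) σ|ℱ t] := by
  have hτ := isStrategy_bestResponse (μ := μ) (V := V) hσ hX.adapted hY.adapted hZ.adapted htT
  filter_upwards [ae_le_condExp_payoffD_of_step hτ.1 hσ.1 (fun ω => (hτ.2 ω).2)
    (fun ω => (hσ.2 ω).2) hX.adapted hY.adapted hZ.adapted (hτ.integrable_payoffD hσ hX hY hZ)
    (fun s hs => hV.integrable hX hY hZ hs) hV.terminal.le
    (fun s hts hsT => hV.ae_le_bestResponse_step hts hsT) htT] with ω hω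
  exact hω (hτ.2 ω).1 (hσ.2 ω).1

structure IsNashEquilibrium (μ : Measure Ω) (ℱ : Filtration ℕ m0) (X Y Z : ℕ → Ω → ℝ)
    (t T : ℕ) (τs σs : Ω → ℕ) : Prop where
  isStrategy_fst : IsStrategy ℱ t T τs
  isStrategy_snd : IsStrategy ℱ t T σs
  fst_optimal : ∀ τ, IsStrategy ℱ t T τ →
    μ[payoffD X Y Z τ σs|ℱ t] ≤ᵐ[μ] μ[payoffD X Y Z τs σs|ℱ t]
  snd_optimal : ∀ σ, IsStrategy ℱ t T σ →
    μ[payoffD X Y Z τs σs|ℱ t] ≤ᵐ[μ] μ[payoffD X Y Z τs σ|ℱ t]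

namespace IsNashEquilibrium

variable {τs σs : Ω → ℕ}

theorem swap_neg (h : IsNashEquilibrium μ ℱ X Y Z t T τs σs) :
    IsNashEquilibrium μ ℱ (-Y) (-X) (-Z) t T σs τs where
  isStrategy_fst := h.isStrategy_snd
  isStrategy_snd := h.isStrategy_fst
  fst_optimal σ hσ := by
    simp only [payoffD_neg_swap]
    filter_upwards [h.snd_optimal σ hσ, condExp_neg (payoffD X Y Z τs σ) (ℱ t),
      condExp_neg (payoffD X Y Z τs σs) (ℱ t)] with ω hle hσ_neg hσs_neg
    simpa [hσ_neg, hσs_neg] using hle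
  snd_optimal τ hτ := by
    simp only [payoffD_neg_swap]
    filter_upwards [h.fst_optimal τ hτ, condExp_neg (payoffD X Y Z τ σs) (ℱ t),
      condExp_neg (payoffD X Y Z τs σs) (ℱ t)] with ω hle hτ_neg hτs_neg
    simpa [hτ_neg, hτs_neg] using hle

theorem ae_le_condExp_payoffD [IsFiniteMeasure μ] (h : IsNashEquilibrium μ ℱ X Y Z t T τs σs)
    (hV : IsDynkinValue μ ℱ T X Y Z V) (hX : IsAdaptedIntegrable μ ℱ X)
    (hY : IsAdaptedIntegrable μ ℱ Y) (hZ : IsAdaptedIntegrable μ ℱ Z) (htT : t ≤ T) :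
    V t ≤ᵐ[μ] μ[payoffD X Y Z τs σs|ℱ t] :=
  (hV.ae_le_condExp_payoffD_bestResponse hX hY hZ h.isStrategy_snd htT).trans <|
    h.fst_optimal _ <|
      isStrategy_bestResponse h.isStrategy_snd hX.adapted hY.adapted hZ.adapted htT

theorem ae_condExp_payoffD_le_max [IsFiniteMeasure μ]
    (h : IsNashEquilibrium μ ℱ X Y Z t T τs σs) (hX : IsAdaptedIntegrable μ ℱ X)
    (hY : IsAdaptedIntegrable μ ℱ Y) (hZ : IsAdaptedIntegrable μ ℱ Z) (htT : t < T) :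
    ∀ᵐ ω ∂μ, μ[payoffD X Y Z τs σs|ℱ t] ω ≤ max (X t ω) (Y t ω) := by
  have hτs := h.isStrategy_fst
  have ht : IsStrategy ℱ t T (fun _ : Ω => t) := isStrategy_const ℱ ⟨le_rfl, htT.le⟩
  have hT : IsStrategy ℱ t T (fun _ : Ω => T) := isStrategy_const ℱ ⟨htT.le, le_rfl⟩
  filter_upwards [h.snd_optimal _ ht, h.snd_optimal _ hT,
    ae_condExp_payoffD_eq_of_min_eq hτs.1 ht.1 hX.adapted hY.adapted hZ.adapted
      (hτs.integrable_payoffD ht hX hY hZ) t,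
    ae_condExp_payoffD_eq_of_min_eq hτs.1 hT.1 hX.adapted hY.adapted hZ.adapted
      (hτs.integrable_payoffD hT hX hY hZ) t] with ω hle_t hle_T hstop_t hstop_T
  rcases (hτs.2 ω).1.eq_or_lt with hτ_eq | hτ_gt
  · refine hle_T.trans (le_max_of_le_left (le_of_eq ?_))
    rw [hstop_T (by simp [← hτ_eq, htT.le])]
    simp [payoffD, ← hτ_eq, htT]
  · refine hle_t.trans (le_max_of_le_right (le_of_eq ?_))
    rw [hstop_t (by simp [hτ_gt.le])]
    simp [payoffD, hτ_gt, hτ_gt.not_gt]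

theorem ae_le_max [IsFiniteMeasure μ] (h : IsNashEquilibrium μ ℱ X Y Z t T τs σs)
    (hV : IsDynkinValue μ ℱ T X Y Z V) (hX : IsAdaptedIntegrable μ ℱ X)
    (hY : IsAdaptedIntegrable μ ℱ Y) (hZ : IsAdaptedIntegrable μ ℱ Z) (htT : t < T) :
    ∀ᵐ ω ∂μ, V t ω ≤ max (X t ω) (Y t ω) := by
  filter_upwards [h.ae_le_condExp_payoffD hV hX hY hZ htT.le,
    h.ae_condExp_payoffD_le_max hX hY hZ htT] with ω hV_le hle_max
  exact hV_le.trans hle_max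

theorem ae_min_le_and_le_max [IsFiniteMeasure μ] (h : IsNashEquilibrium μ ℱ X Y Z t T τs σs)
    (hV : IsDynkinValue μ ℱ T X Y Z V) (hX : IsAdaptedIntegrable μ ℱ X)
    (hY : IsAdaptedIntegrable μ ℱ Y) (hZ : IsAdaptedIntegrable μ ℱ Z) (htT : t < T) :
    ∀ᵐ ω ∂μ, min (X t ω) (Y t ω) ≤ V t ω ∧ V t ω ≤ max (X t ω) (Y t ω) := by
  filter_upwards [h.ae_le_max hV hX hY hZ htT,
    h.swap_neg.ae_le_max hV.neg hY.neg hX.neg hZ.neg htT] with ω hle_max hneg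
  refine ⟨?_, hle_max⟩
  simpa [or_comm] using hneg

end IsNashEquilibrium

end Game

end DynkinGame

theorem stmt12_general {Ω : Type*} {m0 : MeasurableSpace Ω} (μ : Measure Ω) [IsProbabilityMeasure μ]
    (ℱ : Filtration ℕ m0) (T : ℕ)
    (X Y Z V : ℕ → Ω → ℝ)
    (hXa : Adapted ℱ X) (hYa : Adapted ℱ Y) (hZa : Adapted ℱ Z)
    (hXi : ∀ s, Integrable (X s) μ) (hYi : ∀ s, Integrable (Y s) μ)
    (hZi : ∀ s, Integrable (Z s) μ)
    (hVT : ∀ ω, V T ω = Z T ω)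
    (hV : ∀ s, s < T → ∀ ω, V s ω =
      min (max (Y s ω) (Z s ω))
        (max (min (X s ω) (Z s ω)) ((μ[V (s + 1) | ℱ s]) ω)))
    (t : ℕ) (htT : t < T)
    (hviol : 0 < μ {ω | V t ω < min (X t ω) (Y t ω) ∨ max (X t ω) (Y t ω) < V t ω}) :
    ¬ ∃ τs σs : Ω → ℕ,
      IsStoppingTime ℱ (fun ω => (τs ω : WithTop ℕ)) ∧ IsStoppingTime ℱ (fun ω => (σs ω : WithTop ℕ)) ∧
      (∀ ω, τs ω ∈ Set.Icc t T) ∧ (∀ ω, σs ω ∈ Set.Icc t T) ∧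
      ∀ τ σ : Ω → ℕ, IsStoppingTime ℱ (fun ω => (τ ω : WithTop ℕ)) → IsStoppingTime ℱ (fun ω => (σ ω : WithTop ℕ)) →
        (∀ ω, τ ω ∈ Set.Icc t T) → (∀ ω, σ ω ∈ Set.Icc t T) →
        (μ[payoffD X Y Z τs σs | ℱ t] ≤ᵐ[μ] μ[payoffD X Y Z τs σ | ℱ t]) ∧
        (μ[payoffD X Y Z τ σs | ℱ t] ≤ᵐ[μ] μ[payoffD X Y Z τs σs | ℱ t]) := by
  rintro ⟨τs, σs, hτ, hσ, hτI, hσI, hNash⟩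
  have hN : DynkinGame.IsNashEquilibrium μ ℱ X Y Z t T τs σs :=
    { isStrategy_fst := ⟨hτ, hτI⟩
      isStrategy_snd := ⟨hσ, hσI⟩
      fst_optimal := fun τ hτ' => (hNash τ σs hτ'.1 hσ hτ'.2 hσI).2
      snd_optimal := fun σ hσ' => (hNash τs σ hτ hσ'.1 hτI hσ'.2).1 }
  have hVal : DynkinGame.IsDynkinValue μ ℱ T X Y Z V :=
    ⟨.of_forall hVT, fun s hs => .of_forall (hV s hs)⟩
  have hsandwich := hN.ae_min_le_and_le_max hVal ⟨hXa, hXi⟩ ⟨hYa, hYi⟩ ⟨hZa, hZi⟩ htT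
  refine hviol.ne' (measure_mono_null (fun ω hω => ?_) (ae_iff.mp hsandwich))
  rintro ⟨hmin, hmax⟩
  exact hω.elim hmin.not_gt hmax.not_gt

/-- If the backward-induction process `V` of the general discrete-time Dynkin game
violates the sandwich condition at some time `t < T`, i.e.
`P(V_t < X_t ∧ Y_t or V_t > X_t ∨ Y_t) > 0`, then the Dynkin game `GDG_t(X,Y,Z)`
started at time `t` does not admit a Nash equilibrium. -/
theorem stmt12 {Ω : Type*} {m0 : MeasurableSpace Ω} (μ : Measure Ω) [IsProbabilityMeasure μ]
    (ℱ : Filtration ℕ m0) (T : ℕ)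
    (X Y Z V : ℕ → Ω → ℝ)
    (hXa : Adapted ℱ X) (hYa : Adapted ℱ Y) (hZa : Adapted ℱ Z)
    (hXi : ∀ s, Integrable (X s) μ) (hYi : ∀ s, Integrable (Y s) μ)
    (hZi : ∀ s, Integrable (Z s) μ)
    (htermX : ∀ ω, X T ω = Z T ω) (htermY : ∀ ω, Y T ω = Z T ω)
    (hVT : ∀ ω, V T ω = Z T ω)
    (hV : ∀ s, s < T → ∀ ω, V s ω =
      min (max (Y s ω) (Z s ω))
        (max (min (X s ω) (Z s ω)) ((μ[V (s + 1) | ℱ s]) ω)))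
    (t : ℕ) (htT : t < T)
    (hviol : 0 < μ {ω | V t ω < min (X t ω) (Y t ω) ∨ max (X t ω) (Y t ω) < V t ω}) :
    ¬ ∃ τs σs : Ω → ℕ,
      IsStoppingTime ℱ (fun ω => (τs ω : WithTop ℕ)) ∧ IsStoppingTime ℱ (fun ω => (σs ω : WithTop ℕ)) ∧
      (∀ ω, τs ω ∈ Set.Icc t T) ∧ (∀ ω, σs ω ∈ Set.Icc t T) ∧
      ∀ τ σ : Ω → ℕ, IsStoppingTime ℱ (fun ω => (τ ω : WithTop ℕ)) → IsStoppingTime ℱ (fun ω => (σ ω : WithTop ℕ)) →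
        (∀ ω, τ ω ∈ Set.Icc t T) → (∀ ω, σ ω ∈ Set.Icc t T) →
        (μ[payoffD X Y Z τs σs | ℱ t] ≤ᵐ[μ] μ[payoffD X Y Z τs σ | ℱ t]) ∧
        (μ[payoffD X Y Z τ σs | ℱ t] ≤ᵐ[μ] μ[payoffD X Y Z τs σs | ℱ t]) :=
  stmt12_general μ ℱ T X Y Z V hXa hYa hZa hXi hYi hZi hVT hV t htT hviol
end
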